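/- arXiv:1707.08483 — 5 statements merged into one kernel-verified Lean document; each statement's English description precedes it below -/
import Mathlib

section
/- Let n ≥ 2 be an integer, α > 0, p ∈ {1,…,n−1} coprime to n, and g a real number with M = 2πp/α − ng ≠ 0. Then for every x ∈ E_n, the point x belongs to the simplex Σ̄_{g,p} if and only if (1) sgn(M)·⟨a_{j,p}, x − ρ_p⟩ ≥ 0 for all j = 1,…,n−1, and (2) sgn(M)·⟨a_{max,p}, x − ρ_p⟩ ≤ |M|. -/
/-!
For `1 ≤ j ≤ n - 1` the pairing `⟨a_{j,p}, ρ_p⟩` is `g`, lowered by `2π/α` exactly when `j + p`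
wraps past `n`; this is the shift built into the convention `x_{n+k} = x_k - 2π/α`, so
`⟨a_{j,p}, x - ρ_p⟩ = x_j - x_{j+p} - g`. Summed over all `j = 1, …, n`, the differences
`x_j - x_{j+p}` cancel cyclically up to `p` wrap-arounds, so the `n` quantities `x_j - x_{j+p} - g`
add up to `M`. Hence the last wall value is `M - ⟨a_{max,p}, x - ρ_p⟩`, and
`sgn(M)(M - t) ≥ 0` is the same as `sgn(M) t ≤ |M|`.
-/

noncomputable section
open Real Finset
open scoped Classical

/-- The standard basis vector `e_j` of `ℝⁿ` (1-based index), extended `n`-periodically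
(`e_{n+j} = e_j`). -/
def ee (n j : ℕ) : Fin n → ℝ := fun i => if ((i : ℕ) + 1) % n = j % n then 1 else 0

/-- The standard inner product on `ℝⁿ`. -/
def inn {n : ℕ} (x y : Fin n → ℝ) : ℝ := ∑ i, x i * y i

/-- The coordinate `x_j` (1-based index) with the convention `x_{n+k} = x_k - 2π/α`. -/
def coord {n : ℕ} (α : ℝ) (x : Fin n → ℝ) (j : ℕ) : ℝ :=
  if h : 0 < n then x ⟨(j - 1) % n, Nat.mod_lt _ h⟩ - 2 * π / α * (((j - 1) / n : ℕ) : ℝ)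
  else 0

/-- The simple roots `a_{j,p} = e_j - e_{j+p}`. -/
def aa (n p j : ℕ) : Fin n → ℝ := ee n j - ee n (j + p)

/-- The closed simplex `Σ̄_{g,p} = {x ∈ E_n : sgn(M)(x_j - x_{j+p} - g) ≥ 0, j = 1,…,n}`,
where `M = 2πp/α - ng`. -/
def SigmaBar (n p : ℕ) (α g : ℝ) : Set (Fin n → ℝ) :=
  {x | (∑ i, x i) = 0 ∧ ∀ j ∈ Icc 1 n,
    0 ≤ Real.sign (2 * π * p / α - n * g) * (coord α x j - coord α x (j + p) - g)}

/-- The interior `Σ_{g,p}` of the simplex, cut out by the strict inequalities. -/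
def SigmaInt (n p : ℕ) (α g : ℝ) : Set (Fin n → ℝ) :=
  {x | (∑ i, x i) = 0 ∧ ∀ j ∈ Icc 1 n,
    0 < Real.sign (2 * π * p / α - n * g) * (coord α x j - coord α x (j + p) - g)}

/-- `g` is a type (i) coupling, with `q ∈ {1,…,n-1}` the multiplicative inverse of `p` mod `n`. -/
def TypeI (n p q : ℕ) (α g : ℝ) : Prop :=
  1 ≤ q ∧ q ≤ n - 1 ∧ (p * q) % n = 1 % n ∧
  ((2 * π / α * ((p : ℝ) / n - 1 / ((n : ℝ) * q)) < g ∧ g < 2 * π / α * ((p : ℝ) / n)) ∨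
   (2 * π / α * ((p : ℝ) / n) < g ∧
      g < 2 * π / α * ((p : ℝ) / n + 1 / ((n : ℝ) * ((n : ℝ) - q)))))

/-- `ρ_p = g(ω_{1,p}+…+ω_{n-p,p}) + (g - 2π/α)(ω_{n-p+1,p}+…+ω_{n-1,p})`. -/
def rhoP (n p : ℕ) (α g : ℝ) (ω : ℕ → Fin n → ℝ) : Fin n → ℝ :=
  g • (∑ j ∈ Icc 1 (n - p), ω j) + (g - 2 * π / α) • (∑ j ∈ Icc (n - p + 1) (n - 1), ω j)

/-- `Λ⁺_{p,|M|}`: nonnegative integral combinations of the `ω_{j,p}` with coefficient sum `≤ |M|`. -/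
def Lam (n : ℕ) (Mabs : ℝ) (ω : ℕ → Fin n → ℝ) : Set (Fin n → ℝ) :=
  {μ | ∃ m : ℕ → ℕ, (∑ j ∈ Icc 1 (n - 1), (m j : ℝ)) ≤ Mabs ∧
    μ = ∑ j ∈ Icc 1 (n - 1), (m j : ℝ) • ω j}

/-- The fundamental weight `ω_r = e_1+…+e_r - (r/n)(e_1+…+e_n)`. -/
def omegaStd (n r : ℕ) : Fin n → ℝ :=
  fun i => (if (i : ℕ) + 1 ≤ r then 1 else 0) - (r : ℝ) / n

/-- Membership in the orbit `S_n(ω_r)` of `ω_r` under coordinate permutations. -/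
def inOrbit (n r : ℕ) (ν : Fin n → ℝ) : Prop :=
  ∃ σ : Equiv.Perm (Fin n), ν = fun i => omegaStd n r (σ i)

/-- The orbit `S_n(ω_r)` as a finite set. -/
def orbitF (n r : ℕ) : Finset (Fin n → ℝ) :=
  Finset.image (fun σ : Equiv.Perm (Fin n) => fun i => omegaStd n r (σ i)) Finset.univ

/-- `V_ν(g;x) = ∏_{a ∈ A_{n-1}, ⟨a,ν⟩=1} sin(α(⟨a,x⟩+g)/2)/sin(α⟨a,x⟩/2)`. -/
def Vnu (n : ℕ) (α g : ℝ) (ν x : Fin n → ℝ) : ℝ :=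
  ∏ j ∈ Icc 1 n, ∏ k ∈ Icc 1 n,
    if j ≠ k ∧ inn (ee n j - ee n k) ν = 1 then
      Real.sin (α * (inn (ee n j - ee n k) x + g) / 2) /
        Real.sin (α * inn (ee n j - ee n k) x / 2)
    else 1

/-- `V_J(g;x) = ∏_{j∈J, k∉J} sin(α(x_j-x_k+g)/2)/sin(α(x_j-x_k)/2)`. -/
def VJ (n : ℕ) (α g : ℝ) (J : Finset ℕ) (x : Fin n → ℝ) : ℝ :=
  ∏ j ∈ J, ∏ k ∈ Icc 1 n \ J,
    Real.sin (α * (coord α x j - coord α x k + g) / 2) /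
      Real.sin (α * (coord α x j - coord α x k) / 2)

/-- `F_J(g;x) = ∏_{j,k∈J, j≠k} sin(α(x_j-x_k)/2)/sin(α(x_j-x_k+g)/2)`. -/
def FJ (n : ℕ) (α g : ℝ) (J : Finset ℕ) (x : Fin n → ℝ) : ℝ :=
  ∏ j ∈ J, ∏ k ∈ J,
    if j ≠ k then
      Real.sin (α * (coord α x j - coord α x k) / 2) /
        Real.sin (α * (coord α x j - coord α x k + g) / 2)
    else 1

/-- The trigonometric Pochhammer symbol `(z : sin_α)_m`. -/
def poch (α z : ℝ) (m : ℤ) : ℝ :=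
  if 0 ≤ m then ∏ l ∈ Finset.range m.toNat, Real.sin (α * (z + l) / 2)
  else 1 / ∏ l ∈ Finset.Icc 1 (-m).toNat, Real.sin (α * (z - l) / 2)

/-- Membership in the set of positive roots `A⁺_{n-1,p}`. -/
def inPosRoots (n p : ℕ) (v : Fin n → ℝ) : Prop :=
  (∃ j ∈ Icc 1 n, ∃ k ∈ Icc 1 n, j ≠ k ∧ v = ee n j - ee n k) ∧
  ∃ c : ℕ → ℕ, v = ∑ j ∈ Icc 1 (n - 1), (c j : ℝ) • aa n p j

/-- The lattice function `Δ_p(μ)`. -/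
def Delta (n p : ℕ) (α g : ℝ) (ω : ℕ → Fin n → ℝ) (μ : Fin n → ℝ) : ℝ :=
  ∏ j ∈ Icc 1 n, ∏ k ∈ Icc 1 n,
    if inPosRoots n p (ee n j - ee n k) then
      Real.sin (α * inn (ee n j - ee n k)
          (rhoP n p α g ω + Real.sign (2 * π * p / α - n * g) • μ) / 2) /
        Real.sin (α * inn (ee n j - ee n k) (rhoP n p α g ω) / 2) *
      (poch α (inn (ee n j - ee n k) (rhoP n p α g ω) +
            Real.sign (2 * π * p / α - n * g) * g)
          ⌊Real.sign (2 * π * p / α - n * g) * inn (ee n j - ee n k) μ⌋ /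
        poch α (inn (ee n j - ee n k) (rhoP n p α g ω) + 1 -
            Real.sign (2 * π * p / α - n * g) * g)
          ⌊Real.sign (2 * π * p / α - n * g) * inn (ee n j - ee n k) μ⌋)
    else 1

/-- The coefficient `W_ν(ρ_p + sgn(M)μ)` (equal to `0` when `μ + ν ∉ Λ⁺_{p,|M|}`). -/
def Wmu (n p : ℕ) (α g : ℝ) (ω : ℕ → Fin n → ℝ) (s : (Fin n → ℝ) → ℝ)
    (μ ν : Fin n → ℝ) : ℝ :=
  if μ + ν ∈ Lam n |2 * π * p / α - n * g| ω then
    s ν * Real.sqrt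
      (Vnu n α g ν (rhoP n p α g ω + Real.sign (2 * π * p / α - n * g) • μ) *
       Vnu n α g ν (-(rhoP n p α g ω) - Real.sign (2 * π * p / α - n * g) • (μ + ν)))
  else 0

/-- The discrete difference operator `Ŝ_{r,M}` acting on lattice functions. -/
def SOp (n p r : ℕ) (α g : ℝ) (ω : ℕ → Fin n → ℝ) (s : (Fin n → ℝ) → ℝ)
    (φ : (Fin n → ℝ) → ℂ) : (Fin n → ℝ) → ℂ :=
  fun x => ∑ ν ∈ orbitF n r,
    (Wmu n p α g ω s (Real.sign (2 * π * p / α - n * g) • (x - rhoP n p α g ω)) ν : ℂ) *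
      φ (x + Real.sign (2 * π * p / α - n * g) • ν)

/-- The inner product `(φ, ψ)_{p,M}` on lattice functions. -/
def ip (n p : ℕ) (α g : ℝ) (ω : ℕ → Fin n → ℝ) (φ ψ : (Fin n → ℝ) → ℂ) : ℂ :=
  ∑ᶠ μ ∈ Lam n |2 * π * p / α - n * g| ω,
    φ (rhoP n p α g ω + Real.sign (2 * π * p / α - n * g) • μ) *
      starRingEnd ℂ (ψ (rhoP n p α g ω + Real.sign (2 * π * p / α - n * g) • μ))

/-- The elementary symmetric function `ℰ_r(u) = Σ_{ν ∈ S_n(ω_r)} exp(iα⟨ν,u⟩)`. -/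
def calE (n r : ℕ) (α : ℝ) (u : Fin n → ℝ) : ℂ :=
  ∑ ν ∈ orbitF n r, Complex.exp (Complex.I * (α : ℂ) * (inn ν u : ℂ))

lemma Real.sign_mul_self_eq_abs (r : ℝ) : Real.sign r * r = |r| := by
  rcases lt_trichotomy r 0 with hr | rfl | hr
  · rw [Real.sign_of_neg hr, abs_of_neg hr, neg_one_mul]
  · simp
  · rw [Real.sign_of_pos hr, abs_of_pos hr, one_mul]

lemma inn_eq_dotProduct {n : ℕ} (x y : Fin n → ℝ) : inn x y = x ⬝ᵥ y := rfl

lemma inn_sub_left {n : ℕ} (u v w : Fin n → ℝ) : inn (u - v) w = inn u w - inn v w :=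
  sub_dotProduct u v w

lemma inn_sub_right {n : ℕ} (u v w : Fin n → ℝ) : inn u (v - w) = inn u v - inn u w :=
  dotProduct_sub u v w

lemma sum_inn {n : ℕ} {ι : Type*} (s : Finset ι) (u : ι → Fin n → ℝ) (v : Fin n → ℝ) :
    inn (∑ i ∈ s, u i) v = ∑ i ∈ s, inn (u i) v :=
  sum_dotProduct s u v

lemma sum_Icc_ite_le_sub {n : ℕ} (p : ℕ) (hpn : p < n) (c : ℝ) :
    ∑ j ∈ Icc 1 n, (if j ≤ n - p then 0 else c) = p * c := by
  rw [Finset.sum_ite, Finset.sum_const_zero, zero_add, Finset.sum_const, nsmul_eq_mul]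
  have hwrap : (Icc 1 n).filter (fun j => ¬ j ≤ n - p) = Icc (n - p + 1) n := by
    ext j
    simp only [mem_filter, mem_Icc]
    omega
  rw [hwrap, Nat.card_Icc, show n + 1 - (n - p + 1) = p by omega]

lemma forall_mem_Icc_one_iff {n : ℕ} (hn : 1 ≤ n) {P : ℕ → Prop} :
    (∀ j ∈ Icc 1 n, P j) ↔ (∀ j, 1 ≤ j → j ≤ n - 1 → P j) ∧ P n := by
  constructor
  · intro h
    exact ⟨fun j hj1 hjn => h j (mem_Icc.2 ⟨hj1, by omega⟩), h n (mem_Icc.2 ⟨hn, le_rfl⟩)⟩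
  · rintro ⟨hlow, hlast⟩ j hj
    obtain ⟨hj1, hjn⟩ := mem_Icc.1 hj
    obtain hj | rfl : j ≤ n - 1 ∨ j = n := by omega
    exacts [hlow j hj1 hj, hlast]

section Roots

open Fin.NatCast

variable {n : ℕ} [NeZero n]

lemma ee_eq_single {m : ℕ} (hm : 1 ≤ m) : ee n m = Pi.single ((m - 1 : ℕ) : Fin n) 1 := by
  obtain ⟨k, rfl⟩ : ∃ k, m = k + 1 := ⟨m - 1, by omega⟩
  ext i
  have hi : (i : ℕ) % n = i := Nat.mod_eq_of_lt i.isLt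
  have key : ((i : ℕ) + 1) % n = (k + 1) % n ↔ i = ((k + 1 - 1 : ℕ) : Fin n) := by
    rw [Nat.add_sub_cancel, Fin.ext_iff, Fin.val_natCast]
    exact ⟨fun h => hi ▸ Nat.ModEq.add_right_cancel' 1 h,
      fun h => by rw [h, Nat.mod_add_mod]⟩
  simp only [ee, Pi.single_apply, key]

lemma inn_ee {m : ℕ} (hm : 1 ≤ m) (y : Fin n → ℝ) : inn (ee n m) y = y ((m - 1 : ℕ) : Fin n) := by
  rw [inn_eq_dotProduct, ee_eq_single hm, single_dotProduct, one_mul]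

lemma inn_aa (p : ℕ) {j : ℕ} (hj : 1 ≤ j) (y : Fin n → ℝ) :
    inn (aa n p j) y = y ((j - 1 : ℕ) : Fin n) - y ((j - 1 + p : ℕ) : Fin n) := by
  rw [aa, inn_sub_left, inn_ee hj, inn_ee (by omega), Nat.sub_add_comm hj]

lemma coord_eq (α : ℝ) (x : Fin n → ℝ) (j : ℕ) :
    coord α x j = x ((j - 1 : ℕ) : Fin n) - 2 * π / α * (((j - 1) / n : ℕ) : ℝ) := by
  rw [coord, dif_pos (Nat.pos_of_neZero n)]
  congr 3

lemma sum_Icc_comp_natCast_add (y : Fin n → ℝ) (s : ℕ) :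
    ∑ j ∈ Icc 1 n, y ((j - 1 + s : ℕ) : Fin n) = ∑ i, y i := by
  rw [← Finset.Ico_add_one_right_eq_Icc, Finset.sum_Ico_eq_sum_range, Nat.add_sub_cancel,
    ← Fin.sum_univ_eq_sum_range (fun k => y ((1 + k - 1 + s : ℕ) : Fin n)),
    ← Equiv.sum_comp (Equiv.addRight (s : Fin n)) y]
  refine Finset.sum_congr rfl fun i _ => ?_
  simp [Nat.cast_add]

lemma sum_inn_aa_eq_zero (p : ℕ) (y : Fin n → ℝ) : ∑ j ∈ Icc 1 n, inn (aa n p j) y = 0 := by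
  rw [Finset.sum_congr rfl fun j hj => inn_aa p (mem_Icc.mp hj).1 y, Finset.sum_sub_distrib,
    sum_Icc_comp_natCast_add y p, sub_eq_zero]
  simpa using sum_Icc_comp_natCast_add y 0

lemma coord_sub_coord_add {p : ℕ} (hpn : p < n) (α : ℝ) (x : Fin n → ℝ) {j : ℕ} (hj1 : 1 ≤ j)
    (hjn : j ≤ n) :
    coord α x j - coord α x (j + p) = inn (aa n p j) x + if j ≤ n - p then 0 else 2 * π / α := by
  have hn := Nat.pos_of_neZero n
  have hj : (j - 1) / n = 0 := Nat.div_eq_of_lt (by omega)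
  have hjp : (j + p - 1) / n = if j ≤ n - p then 0 else 1 := by
    split_ifs
    · exact Nat.div_eq_of_lt (by omega)
    · rw [show j + p - 1 = (j + p - 1 - n) + n by omega, Nat.add_div_right _ hn,
        Nat.div_eq_of_lt (by omega)]
  rw [coord_eq, coord_eq, inn_aa p hj1, hj, hjp, Nat.sub_add_comm hj1]
  split_ifs <;> push_cast <;> ring

lemma sum_coord_sub_coord_add_sub {p : ℕ} (hpn : p < n) (α g : ℝ) (x : Fin n → ℝ) :
    ∑ j ∈ Icc 1 n, (coord α x j - coord α x (j + p) - g) = 2 * π * p / α - n * g := by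
  rw [Finset.sum_congr rfl fun j hj =>
      congrArg (· - g) (coord_sub_coord_add hpn α x (mem_Icc.mp hj).1 (mem_Icc.mp hj).2),
    Finset.sum_sub_distrib, Finset.sum_add_distrib, sum_inn_aa_eq_zero, sum_Icc_ite_le_sub p hpn,
    Finset.sum_const, Nat.card_Icc, Nat.add_sub_cancel, nsmul_eq_mul]
  ring

end Roots

lemma sum_inn_eq_ite_mem {n : ℕ} {v : Fin n → ℝ} {ω : ℕ → Fin n → ℝ} {j : ℕ} {S : Finset ℕ}
    (hdual : ∀ k ∈ S, inn v (ω k) = if j = k then 1 else 0) :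
    ∑ k ∈ S, inn v (ω k) = if j ∈ S then 1 else 0 := by
  rw [Finset.sum_congr rfl hdual, Finset.sum_ite_eq]

def IsDualToRoots (n p : ℕ) (ω : ℕ → Fin n → ℝ) : Prop :=
  ∀ j : ℕ, 1 ≤ j → j ≤ n - 1 → ∀ k : ℕ, 1 ≤ k → k ≤ n - 1 →
    inn (aa n p j) (ω k) = if j = k then (1 : ℝ) else 0

lemma inn_aa_rhoP {n p : ℕ} (hp1 : 1 ≤ p) (α g : ℝ) {ω : ℕ → Fin n → ℝ}
    (hω : IsDualToRoots n p ω) {j : ℕ} (hj1 : 1 ≤ j) (hjn : j ≤ n - 1) :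
    inn (aa n p j) (rhoP n p α g ω) = g - if j ≤ n - p then 0 else 2 * π / α := by
  have hdual : ∀ {S : Finset ℕ}, S ⊆ Icc 1 (n - 1) →
      ∑ k ∈ S, inn (aa n p j) (ω k) = if j ∈ S then 1 else 0 := fun hS =>
    sum_inn_eq_ite_mem fun k hk =>
      hω j hj1 hjn k (mem_Icc.mp (hS hk)).1 (mem_Icc.mp (hS hk)).2
  have hlow := hdual (S := Icc 1 (n - p)) fun k hk => by
    simp only [mem_Icc] at hk ⊢; omega
  have hhigh := hdual (S := Icc (n - p + 1) (n - 1)) fun k hk => by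
    simp only [mem_Icc] at hk ⊢; omega
  simp only [inn_eq_dotProduct, rhoP, dotProduct_add, dotProduct_smul, dotProduct_sum,
    smul_eq_mul] at hlow hhigh ⊢
  rw [hlow, hhigh]
  simp only [mem_Icc]
  split_ifs <;> first | omega | ring

lemma inn_aa_sub_rhoP {n p : ℕ} [NeZero n] (hp1 : 1 ≤ p) (hpn : p < n) (α g : ℝ)
    {ω : ℕ → Fin n → ℝ} (hω : IsDualToRoots n p ω) (x : Fin n → ℝ) {j : ℕ} (hj1 : 1 ≤ j)
    (hjn : j ≤ n - 1) :
    inn (aa n p j) (x - rhoP n p α g ω) = coord α x j - coord α x (j + p) - g := by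
  rw [inn_sub_right, inn_aa_rhoP hp1 α g hω hj1 hjn, coord_sub_coord_add hpn α x hj1 (by omega)]
  ring

lemma inn_sum_aa_sub_rhoP {n p : ℕ} [NeZero n] (hp1 : 1 ≤ p) (hpn : p < n) (α g : ℝ)
    {ω : ℕ → Fin n → ℝ} (hω : IsDualToRoots n p ω) (x : Fin n → ℝ) :
    inn (∑ j ∈ Icc 1 (n - 1), aa n p j) (x - rhoP n p α g ω) =
      (2 * π * p / α - n * g) - (coord α x n - coord α x (n + p) - g) := by
  have hn := Nat.pos_of_neZero n
  have hsplit := Finset.sum_Icc_succ_top (by omega : 1 ≤ n - 1 + 1)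
    fun j => coord α x j - coord α x (j + p) - g
  rw [Nat.sub_add_cancel hn, sum_coord_sub_coord_add_sub hpn] at hsplit
  rw [sum_inn, Finset.sum_congr rfl fun j hj =>
    inn_aa_sub_rhoP hp1 hpn α g hω x (mem_Icc.1 hj).1 (mem_Icc.1 hj).2, hsplit]
  ring

theorem statement0_general (n p : ℕ) (α g : ℝ)
    (hp1 : 1 ≤ p) (hpn : p ≤ n - 1)
    (ω : ℕ → Fin n → ℝ)
    (hωδ : ∀ j : ℕ, 1 ≤ j → j ≤ n - 1 → ∀ k : ℕ, 1 ≤ k → k ≤ n - 1 →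
      inn (aa n p j) (ω k) = if j = k then (1 : ℝ) else 0)
    (x : Fin n → ℝ) (hx : ∑ i, x i = 0) :
    x ∈ SigmaBar n p α g ↔
      ((∀ j : ℕ, 1 ≤ j → j ≤ n - 1 →
          0 ≤ Real.sign (2 * π * p / α - n * g) *
            inn (aa n p j) (x - rhoP n p α g ω)) ∧
        Real.sign (2 * π * p / α - n * g) *
            inn (∑ j ∈ Icc 1 (n - 1), aa n p j) (x - rhoP n p α g ω) ≤
          |2 * π * p / α - n * g|) := by
  have : NeZero n := ⟨by omega⟩
  rw [SigmaBar, Set.mem_ofPred, and_iff_right hx, forall_mem_Icc_one_iff (by omega),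
    inn_sum_aa_sub_rhoP hp1 (by omega) α g hωδ, ← Real.sign_mul_self_eq_abs,
    mul_sub _ (2 * π * p / α - n * g), sub_le_self_iff]
  refine and_congr_left' (forall₃_congr fun j hj1 hjn => ?_)
  rw [inn_aa_sub_rhoP hp1 (by omega) α g hωδ x hj1 hjn]

/-- Lemma 2.1: characterisation of the simplex `Σ̄_{g,p}` via the
`p`-dependent simple roots and the maximal root `a_{max,p} = a_{1,p}+…+a_{n-1,p}`. -/
theorem statement0 (n p : ℕ) (α g : ℝ)
    (hn : 2 ≤ n) (hα : 0 < α) (hp1 : 1 ≤ p) (hpn : p ≤ n - 1) (hcop : Nat.Coprime p n)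
    (hM : 2 * π * p / α - n * g ≠ 0)
    (ω : ℕ → Fin n → ℝ)
    (hωE : ∀ k : ℕ, 1 ≤ k → k ≤ n - 1 → ∑ i, ω k i = 0)
    (hωδ : ∀ j : ℕ, 1 ≤ j → j ≤ n - 1 → ∀ k : ℕ, 1 ≤ k → k ≤ n - 1 →
      inn (aa n p j) (ω k) = if j = k then (1 : ℝ) else 0)
    (x : Fin n → ℝ) (hx : ∑ i, x i = 0) :
    x ∈ SigmaBar n p α g ↔
      ((∀ j : ℕ, 1 ≤ j → j ≤ n - 1 →
          0 ≤ Real.sign (2 * π * p / α - n * g) *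
            inn (aa n p j) (x - rhoP n p α g ω)) ∧
        Real.sign (2 * π * p / α - n * g) *
            inn (∑ j ∈ Icc 1 (n - 1), aa n p j) (x - rhoP n p α g ω) ≤
          |2 * π * p / α - n * g|) :=
  statement0_general n p α g hp1 hpn ω hωδ x hx
end
end

section
/- Let n ≥ 2 be an integer, p ∈ {1,…,n−1} coprime to n, and 1 ≤ j < k ≤ n. Then there exists a unique ℓ ∈ {1,…,n−1} with j + ℓp ≡ k (mod n). Defining i_t ∈ {1,…,n} by i_t ≡ j + (t−1)p (mod n) for t = 1,…,ℓ, the indices i_1,…,i_ℓ are pairwise distinct, the telescoping identity e_j − e_k = Σ_{t=1}^{ℓ} (e_{i_t} − e_{i_t+p}) holds (with the convention e_{n+i} = e_i), and the set K = {i_t : n−p < i_t ≤ n, t = 1,…,ℓ} has cardinality |K| = (j − k + ℓp)/n, which satisfies |K| < p. -/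
noncomputable section
open Real Finset
open scoped Classical

/-! Since `p` is a unit modulo `n`, `t ↦ j + t p` is injective on `{0, …, n - 1}` modulo `n`,
which gives both the unique `ℓ` and the distinctness of the `i_t`. Because `e` is `n`-periodic,
`e_{i_t} - e_{i_t + p} = e_{j + (t-1)p} - e_{j + tp}`, so the sum telescopes to `e_j - e_{j + ℓp}`.
Finally `i_t > n - p` says exactly that passing from `j - 1 + (t-1)p` to `j - 1 + tp` crosses a
multiple of `n`, so `|K|` counts the carries of `⌊(j - 1 + tp)/n⌋`, which add up to
`⌊(j - 1 + ℓp)/n⌋ = (j + ℓp - k)/n < ℓp/n < p`. -/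

theorem ee_eq_of_modEq {n a b : ℕ} (h : a ≡ b [MOD n]) : ee n a = ee n b := by
  funext i
  simp only [ee, show a % n = b % n from h]

theorem sum_Icc_one_sub_eq {M : Type*} [AddCommGroup M] (f : ℕ → M) (ℓ : ℕ) :
    ∑ t ∈ Icc 1 ℓ, (f (t - 1) - f t) = f 0 - f ℓ := by
  induction ℓ with
  | zero => simp
  | succ ℓ ih => rw [sum_Icc_succ_top (by omega), ih, Nat.add_sub_cancel]; abel

section ArithmeticProgression

variable {n p : ℕ}

theorem eq_of_add_mul_modEq_add_mul (hcop : p.Coprime n) {a s t : ℕ} (hs : s < n) (ht : t < n)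
    (h : a + s * p ≡ a + t * p [MOD n]) : s = t :=
  ((Nat.ModEq.add_left_cancel' a h).cancel_right_of_coprime hcop.symm).eq_of_lt_of_lt hs ht

theorem existsUnique_lt_add_mul_modEq (hn : 0 < n) (hcop : p.Coprime n) (a b : ℕ) :
    ∃! ℓ, ℓ < n ∧ a + ℓ * p ≡ b [MOD n] := by
  have : NeZero n := ⟨hn.ne'⟩
  have hsol : a + (((b : ZMod n) - a) * (p : ZMod n)⁻¹).val * p ≡ b [MOD n] := by
    rw [← ZMod.natCast_eq_natCast_iff]
    push_cast
    rw [ZMod.natCast_zmod_val]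
    linear_combination ((b : ZMod n) - a) * ZMod.coe_mul_inv_eq_one p hcop
  exact ⟨_, ⟨ZMod.val_lt _, hsol⟩, fun m ⟨hm, hmb⟩ =>
    eq_of_add_mul_modEq_add_mul hcop hm (ZMod.val_lt _) (hmb.trans hsol.symm)⟩

/-- `n ≤ x % n + p` says that the step `x ↦ x + p` crosses a multiple of `n`. -/
theorem card_filter_carry_add_div (hp : p < n) (b ℓ : ℕ) :
    #{t ∈ Icc 1 ℓ | n ≤ (b + (t - 1) * p) % n + p} + b / n = (b + ℓ * p) / n := by
  induction ℓ with
  | zero => simp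
  | succ ℓ ih =>
    have hcarry := Nat.add_div (a := b + ℓ * p) (b := p) (by omega : 0 < n)
    rw [Nat.div_eq_of_lt hp, Nat.mod_eq_of_lt hp] at hcarry
    rw [card_filter, sum_Icc_succ_top (by omega), ← card_filter, Nat.add_sub_cancel,
      add_one_mul, ← add_assoc, hcarry, ← ih]
    split_ifs <;> omega

end ArithmeticProgression

theorem sub_one_div_eq_sub_div_of_modEq {n a b : ℕ} (h : a ≡ b [MOD n]) (hb : 1 ≤ b)
    (hbn : b ≤ n) : (a - 1) / n = (a - b) / n := by
  rcases le_or_gt b a with hba | hab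
  · obtain ⟨m, hm⟩ := (Nat.modEq_iff_dvd' hba).1 h.symm
    rw [hm, show a - 1 = n * m + (b - 1) by omega, Nat.mul_add_div (by omega),
      Nat.mul_div_cancel_left m (by omega), Nat.div_eq_of_lt (by omega), add_zero]
  · rw [Nat.div_eq_of_lt (by omega), Nat.div_eq_of_lt (by omega)]

/-- The paper's `i_t ∈ {1, …, n}`, congruent to `j + (t - 1) p` modulo `n`. -/
def stepIndex (n p j t : ℕ) : ℕ := (j + (t - 1) * p - 1) % n + 1

section StepIndex

variable {n p j : ℕ}

theorem stepIndex_modEq (hj : 1 ≤ j) (t : ℕ) : stepIndex n p j t ≡ j + (t - 1) * p [MOD n] := by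
  have h := (Nat.mod_modEq (j + (t - 1) * p - 1) n).add_right 1
  rwa [Nat.sub_add_cancel (by omega)] at h

theorem stepIndex_injOn (hcop : p.Coprime n) (hj : 1 ≤ j) :
    Set.InjOn (stepIndex n p j) (Icc 1 n : Finset ℕ) := by
  intro s hs t ht h
  rw [mem_coe, mem_Icc] at hs ht
  have hmod : j + (s - 1) * p ≡ j + (t - 1) * p [MOD n] :=
    (stepIndex_modEq hj s).symm.trans (h ▸ stepIndex_modEq hj t)
  have := eq_of_add_mul_modEq_add_mul hcop (by omega) (by omega) hmod
  omega

theorem sum_stepIndex_telescope (hj : 1 ≤ j) (ℓ : ℕ) :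
    ∑ t ∈ Icc 1 ℓ, (ee n (stepIndex n p j t) - ee n (stepIndex n p j t + p)) =
      ee n j - ee n (j + ℓ * p) := by
  have hstep : ∀ t ∈ Icc 1 ℓ, ee n (stepIndex n p j t) - ee n (stepIndex n p j t + p) =
      ee n (j + (t - 1) * p) - ee n (j + t * p) := by
    intro t ht
    have hnext := (stepIndex_modEq (n := n) (p := p) hj t).add_right p
    rw [add_assoc, ← add_one_mul, Nat.sub_add_cancel (mem_Icc.1 ht).1] at hnext
    rw [ee_eq_of_modEq (stepIndex_modEq hj t), ee_eq_of_modEq hnext]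
  rw [sum_congr rfl hstep, sum_Icc_one_sub_eq (fun t => ee n (j + t * p)), zero_mul, add_zero]

theorem card_filter_stepIndex_add_div (hp : p < n) (hj : 1 ≤ j) (ℓ : ℕ) :
    #{t ∈ Icc 1 ℓ | n - p < stepIndex n p j t} + (j - 1) / n = (j + ℓ * p - 1) / n := by
  have hcond : ∀ t ∈ Icc 1 ℓ, n - p < stepIndex n p j t ↔ n ≤ (j - 1 + (t - 1) * p) % n + p := by
    intro t _
    rw [stepIndex, show j + (t - 1) * p - 1 = j - 1 + (t - 1) * p by omega]
    omega
  rw [filter_congr hcond, card_filter_carry_add_div hp, show j - 1 + ℓ * p = j + ℓ * p - 1 by omega]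

end StepIndex

theorem statement6_general (n p j k : ℕ)
    (hp1 : 1 ≤ p) (hpn : p ≤ n - 1) (hcop : Nat.Coprime p n)
    (hj : 1 ≤ j) (hjk : j < k) (hk : k ≤ n) :
    (∃! ℓ : ℕ, ℓ ∈ Icc 1 (n - 1) ∧ (j + ℓ * p) % n = k % n) ∧
    ∀ ℓ : ℕ, ℓ ∈ Icc 1 (n - 1) → (j + ℓ * p) % n = k % n →
      (∀ s ∈ Icc 1 ℓ, ∀ t ∈ Icc 1 ℓ, s ≠ t →
        (j + (s - 1) * p - 1) % n + 1 ≠ (j + (t - 1) * p - 1) % n + 1) ∧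
      (ee n j - ee n k =
        ∑ t ∈ Icc 1 ℓ, (ee n ((j + (t - 1) * p - 1) % n + 1) -
          ee n ((j + (t - 1) * p - 1) % n + 1 + p))) ∧
      ((Icc 1 ℓ).filter (fun t => n - p < (j + (t - 1) * p - 1) % n + 1)).card =
        (j + ℓ * p - k) / n ∧
      (j + ℓ * p - k) / n < p := by
  have hn : 0 < n := by omega
  have hjk_mod : ¬ j ≡ k [MOD n] := by
    intro h
    rcases hk.lt_or_eq with hk | rfl
    · exact hjk.ne (h.eq_of_lt_of_lt (by omega) hk)
    · rw [Nat.ModEq, Nat.mod_self, Nat.mod_eq_of_lt hjk] at h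
      omega
  obtain ⟨ℓ₀, ⟨hℓ₀n, hℓ₀⟩, huniq⟩ := existsUnique_lt_add_mul_modEq hn hcop j k
  have hℓ₀ne : ℓ₀ ≠ 0 := by rintro rfl; exact hjk_mod (by simpa using hℓ₀)
  refine ⟨⟨ℓ₀, ⟨mem_Icc.2 ⟨by omega, by omega⟩, hℓ₀⟩, fun ℓ ⟨hℓ, hℓk⟩ =>
    huniq ℓ ⟨by rw [mem_Icc] at hℓ; omega, hℓk⟩⟩, fun ℓ hℓ hℓk => ?_⟩
  rw [mem_Icc] at hℓ
  have hcard := card_filter_stepIndex_add_div (by omega : p < n) hj ℓ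
  rw [Nat.div_eq_of_lt (by omega : j - 1 < n), add_zero,
    sub_one_div_eq_sub_div_of_modEq hℓk (by omega) hk] at hcard
  have hℓp : ℓ * p + p ≤ n * p := by
    rw [← add_one_mul]; exact Nat.mul_le_mul_right p (by omega)
  have hsub : Icc 1 ℓ ⊆ Icc 1 n := Icc_subset_Icc_right (by omega)
  refine ⟨fun s hs t ht hst h => hst (stepIndex_injOn hcop hj (hsub hs) (hsub ht) h), ?_, hcard,
    Nat.div_lt_of_lt_mul (by omega)⟩
  rw [← ee_eq_of_modEq hℓk]
  exact (sum_stepIndex_telescope hj ℓ).symm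

/-- decomposition of a positive root `e_j - e_k` as a telescoping sum of the
`p`-dependent simple roots, with distinct intermediate indices `i_t ≡ j + (t-1)p (mod n)`,
and the count `|K| = (j - k + ℓp)/n < p` of indices with `n - p < i_t ≤ n`. -/
theorem statement6 (n p j k : ℕ)
    (hn : 2 ≤ n) (hp1 : 1 ≤ p) (hpn : p ≤ n - 1) (hcop : Nat.Coprime p n)
    (hj : 1 ≤ j) (hjk : j < k) (hk : k ≤ n) :
    (∃! ℓ : ℕ, ℓ ∈ Icc 1 (n - 1) ∧ (j + ℓ * p) % n = k % n) ∧
    ∀ ℓ : ℕ, ℓ ∈ Icc 1 (n - 1) → (j + ℓ * p) % n = k % n →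
      (∀ s ∈ Icc 1 ℓ, ∀ t ∈ Icc 1 ℓ, s ≠ t →
        (j + (s - 1) * p - 1) % n + 1 ≠ (j + (t - 1) * p - 1) % n + 1) ∧
      (ee n j - ee n k =
        ∑ t ∈ Icc 1 ℓ, (ee n ((j + (t - 1) * p - 1) % n + 1) -
          ee n ((j + (t - 1) * p - 1) % n + 1 + p))) ∧
      ((Icc 1 ℓ).filter (fun t => n - p < (j + (t - 1) * p - 1) % n + 1)).card =
        (j + ℓ * p - k) / n ∧
      (j + ℓ * p - k) / n < p :=
  statement6_general n p j k hp1 hpn hcop hj hjk hk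
end
end

section
/- Let n ≥ 2 be an integer, α > 0, p ∈ {1,…,n−1} coprime to n, and let g be a type (i) coupling satisfying the quantisation condition M ∈ ℤ ∖ {0}. Then for every r ∈ {1,…,n−1}, every ν ∈ S_n(ω_r), and every μ ∈ Λ⁺_{p,|M|} with μ+ν ∉ Λ⁺_{p,|M|}: all sine denominators occurring in V_ν(g; ρ_p+sgn(M)μ) are nonzero and V_ν(g; ρ_p+sgn(M)μ) = 0. -/
noncomputable section
open Real Finset
open scoped Classical

section Roots

variable {n p : ℕ}

lemma ee_periodic (j : ℕ) : ee n (j + n) = ee n j := by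
  unfold ee; rw [Nat.add_mod_right]

lemma ee_mod_add (x c : ℕ) : ee n (x % n + c) = ee n (x + c) := by
  unfold ee; rw [Nat.mod_add_mod]

lemma aa_mod_add (x c : ℕ) : aa n p (x % n + c) = aa n p (x + c) := by
  rw [aa, aa, ee_mod_add, add_assoc, ee_mod_add, add_assoc]

lemma exists_mem_Icc_ee_eq (hn : 0 < n) (i : ℕ) : ∃ j ∈ Icc 1 n, ee n j = ee n i := by
  refine ⟨(i + n - 1) % n + 1, ?_, ?_⟩
  · have := Nat.mod_lt (i + n - 1) hn
    simp only [mem_Icc]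
    omega
  · rw [ee_mod_add, Nat.sub_add_cancel (by omega), ee_periodic]

lemma ee_dotProduct (hn : 0 < n) {j : ℕ} (hj : 1 ≤ j) (v : Fin n → ℝ) :
    ee n j ⬝ᵥ v = v ⟨(j - 1) % n, Nat.mod_lt _ hn⟩ := by
  have hidx : ((j - 1) % n + 1) % n = j % n := by
    rw [Nat.mod_add_mod, Nat.sub_add_cancel hj]
  rw [dotProduct, Finset.sum_eq_single (⟨(j - 1) % n, Nat.mod_lt _ hn⟩ : Fin n)]
  · simp [ee, hidx]
  · intro i _ hi
    have hne : ((i : ℕ) + 1) % n ≠ j % n := fun h => hi <| Fin.ext <| by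
      rw [← hidx] at h
      have := Nat.ModEq.add_right_cancel' 1 h
      rwa [Nat.ModEq, Nat.mod_eq_of_lt i.isLt, Nat.mod_eq_of_lt (Nat.mod_lt _ hn)] at this
    simp [ee, hne]
  · simp

lemma ee_sub_ee_add_mul (j : ℕ) :
    ∀ t : ℕ, ee n j - ee n (j + t * p) = ∑ s ∈ range t, aa n p (j + s * p)
  | 0 => by simp
  | t + 1 => by
    rw [sum_range_succ, ← ee_sub_ee_add_mul j t, aa, show j + (t + 1) * p = j + t * p + p by ring]
    abel

lemma sum_Icc_add_one_add_self {M : Type*} [AddCommMonoid M] (g : ℕ → M) (m : ℕ) :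
    ∑ ℓ ∈ Icc 1 m, g (ℓ + 1) + g 1 = ∑ ℓ ∈ Icc 1 m, g ℓ + g (m + 1) := by
  induction m with
  | zero => simp
  | succ m ih =>
    rw [sum_Icc_succ_top (by omega), sum_Icc_succ_top (by omega), add_right_comm, ih,
      add_assoc]

lemma sum_Icc_comp_add_of_periodic {M : Type*} [AddCommGroup M] {f : ℕ → M}
    (hf : ∀ x, f (x + n) = f x) (c : ℕ) : ∑ ℓ ∈ Icc 1 n, f (ℓ + c) = ∑ ℓ ∈ Icc 1 n, f ℓ := by
  induction c with
  | zero => rfl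
  | succ c ih =>
    have h := sum_Icc_add_one_add_self (fun ℓ => f (ℓ + c)) n
    rw [show n + 1 + c = 1 + c + n by ring, hf, add_left_inj] at h
    simpa only [add_right_comm _ 1 c, add_assoc] using h.trans ih

lemma sum_Icc_aa : ∑ ℓ ∈ Icc 1 n, aa n p ℓ = 0 := by
  simp only [aa, sum_sub_distrib, sum_Icc_comp_add_of_periodic ee_periodic, sub_self]

lemma mod_add_mul_injective (hcop : p.Coprime n) {c s₁ s₂ : ℕ} (h₁ : s₁ < n) (h₂ : s₂ < n)
    (h : (c + s₁ * p) % n = (c + s₂ * p) % n) : s₁ = s₂ := by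
  have h' : s₁ ≡ s₂ [MOD n] :=
    Nat.ModEq.cancel_right_of_coprime hcop.symm (Nat.ModEq.add_left_cancel' c h)
  rwa [Nat.ModEq, Nat.mod_eq_of_lt h₁, Nat.mod_eq_of_lt h₂] at h'

lemma exists_subset_Icc_ee_sub_ee (hcop : p.Coprime n) {j k : ℕ} (hj : j ∈ Icc 1 n)
    (hk : k ∈ Icc 1 n) (hjk : j ≠ k) :
    ∃ S ⊆ Icc 1 n, 0 < #S ∧ #S < n ∧ ee n j - ee n k = ∑ ℓ ∈ S, aa n p ℓ := by
  rw [mem_Icc] at hj hk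
  set f : ℕ → ℕ := fun s => (j - 1 + s * p) % n + 1 with hf
  have hn : 0 < n := by omega
  have hf_mem : ∀ s, f s ∈ Icc 1 n := fun s => by
    have := Nat.mod_lt (j - 1 + s * p) hn
    simp only [hf, mem_Icc]
    omega
  have hf_inj : Set.InjOn f (range n) := fun s₁ h₁ s₂ h₂ h =>
    mod_add_mul_injective hcop (mem_range.1 h₁) (mem_range.1 h₂) (Nat.succ_injective h)
  have hf_ee : ∀ s, ee n (f s) = ee n (j + s * p) := fun s => by
    rw [hf, ee_mod_add]; congr 1; omega
  have hf_aa : ∀ s, aa n p (f s) = aa n p (j + s * p) := fun s => by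
    rw [hf, aa_mod_add]; congr 1; omega
  have himage : (range n).image f = Icc 1 n :=
    eq_of_subset_of_card_le (fun ℓ hℓ => by obtain ⟨s, -, rfl⟩ := mem_image.1 hℓ; exact hf_mem s)
      (by rw [card_image_of_injOn hf_inj, Nat.card_Icc, card_range]; omega)
  obtain ⟨t, ht, rfl⟩ := mem_image.1 (himage ▸ mem_Icc.2 hk : k ∈ (range n).image f)
  have ht0 : t ≠ 0 := by
    rintro rfl
    apply hjk
    simp only [hf, zero_mul, add_zero, Nat.mod_eq_of_lt (show j - 1 < n by omega)]
    omega
  have hinj_t : Set.InjOn f (range t) :=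
    hf_inj.mono (by simpa using range_subset_range.2 (mem_range.1 ht).le)
  refine ⟨(range t).image f, fun ℓ hℓ => ?_, ?_, ?_, ?_⟩
  · obtain ⟨s, -, rfl⟩ := mem_image.1 hℓ; exact hf_mem s
  · rw [card_image_of_injOn hinj_t, card_range]; omega
  · rw [card_image_of_injOn hinj_t, card_range]; exact mem_range.1 ht
  · rw [sum_image hinj_t, hf_ee, ee_sub_ee_add_mul]
    exact sum_congr rfl fun s _ => (hf_aa s).symm

lemma aa_self_dotProduct (hn : 0 < n) (v : Fin n → ℝ) :
    aa n p n ⬝ᵥ v = -∑ ℓ ∈ Icc 1 (n - 1), aa n p ℓ ⬝ᵥ v := by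
  have hI : Icc 1 n = insert n (Icc 1 (n - 1)) := by ext; simp only [mem_Icc, mem_insert]; omega
  have h := sum_Icc_aa (n := n) (p := p)
  rw [hI, sum_insert (by simp [hn]), add_eq_zero_iff_eq_neg] at h
  rw [h, neg_dotProduct, sum_dotProduct]

lemma eq_zero_of_aa_dotProduct_eq_zero (hcop : p.Coprime n) {v : Fin n → ℝ}
    (hsum : ∑ i, v i = 0) (hv : ∀ ℓ ∈ Icc 1 (n - 1), aa n p ℓ ⬝ᵥ v = 0) : v = 0 := by
  rcases Nat.eq_zero_or_pos n with rfl | hn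
  · exact Subsingleton.elim _ _
  have hv' : ∀ ℓ ∈ Icc 1 n, aa n p ℓ ⬝ᵥ v = 0 := fun ℓ hℓ => by
    rcases eq_or_ne ℓ n with rfl | hℓn
    · rw [aa_self_dotProduct hn, sum_eq_zero hv, neg_zero]
    · exact hv ℓ (by simp only [mem_Icc] at hℓ ⊢; omega)
  have hconst : ∀ i i' : Fin n, v i = v i' := fun i i' => by
    rcases eq_or_ne i i' with rfl | hii'
    · rfl
    obtain ⟨S, hS, -, -, hroot⟩ := exists_subset_Icc_ee_sub_ee (p := p) hcop
      (j := i + 1) (k := i' + 1) (by simp [Nat.succ_le_of_lt i.isLt])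
      (by simp [Nat.succ_le_of_lt i'.isLt]) (by simpa [Fin.val_inj] using hii')
    have h := congrArg (· ⬝ᵥ v) hroot
    simp only [sub_dotProduct, sum_dotProduct, sum_eq_zero fun ℓ hℓ => hv' ℓ (hS hℓ),
      ee_dotProduct hn (Nat.le_add_left 1 _), Nat.add_sub_cancel, Nat.mod_eq_of_lt i.isLt,
      Nat.mod_eq_of_lt i'.isLt, Fin.eta] at h
    linarith
  funext i
  have hn' : (n : ℝ) ≠ 0 := by positivity
  rw [sum_congr rfl fun i' _ => hconst i' i, sum_const, card_univ, Fintype.card_fin,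
    nsmul_eq_mul] at hsum
  exact (mul_eq_zero.1 hsum).resolve_left hn'

end Roots

def IsFundamentalWeights (n p : ℕ) (ω : ℕ → Fin n → ℝ) : Prop :=
  (∀ k : ℕ, 1 ≤ k → k ≤ n - 1 → ∑ i, ω k i = 0) ∧
  ∀ j : ℕ, 1 ≤ j → j ≤ n - 1 → ∀ k : ℕ, 1 ≤ k → k ≤ n - 1 →
    inn (aa n p j) (ω k) = if j = k then (1 : ℝ) else 0

def wrap (n p ℓ : ℕ) : ℤ := if n < ℓ + p then 1 else 0

/-- The labels of `x` at level `A` against the affine simple roots `a_{1,p}, …, a_{n,p}`: for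
`x = ∑ m_j ω_{j,p}` they are `m_1, …, m_{n-1}` and `A - ∑ m_j`. -/
def kacLabel (n p : ℕ) (A : ℝ) (x : Fin n → ℝ) (ℓ : ℕ) : ℝ :=
  aa n p ℓ ⬝ᵥ x + if ℓ = n then A else 0

section Weights

variable {n p : ℕ}

lemma sum_kacLabel (hn : 0 < n) (A : ℝ) (x : Fin n → ℝ) :
    ∑ ℓ ∈ Icc 1 n, kacLabel n p A x ℓ = A := by
  simp only [kacLabel]
  rw [sum_add_distrib, ← sum_dotProduct, sum_Icc_aa, zero_dotProduct,
    sum_ite_eq', if_pos (mem_Icc.2 ⟨hn, le_rfl⟩), zero_add]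

lemma kacLabel_add (A : ℝ) (x z : Fin n → ℝ) (ℓ : ℕ) :
    kacLabel n p A (x + z) ℓ = kacLabel n p A x ℓ + aa n p ℓ ⬝ᵥ z := by
  simp only [kacLabel, dotProduct_add]; ring

lemma sum_wrap (hp : 1 ≤ p) (hpn : p ≤ n) : ∑ k ∈ Icc 1 (n - 1), wrap n p k = (p : ℤ) - 1 := by
  have hfilter : (Icc 1 (n - 1)).filter (fun k => n < k + p) = Icc (n - p + 1) (n - 1) := by
    ext k; simp only [mem_filter, mem_Icc]; omega
  simp only [wrap]
  rw [sum_boole, hfilter, Nat.card_Icc, Nat.cast_sub (by omega)]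
  push_cast
  omega

lemma rhoP_eq_sum (hp : 1 ≤ p) (hpn : p ≤ n) (α g : ℝ) (ω : ℕ → Fin n → ℝ) :
    rhoP n p α g ω = ∑ k ∈ Icc 1 (n - 1), (g - 2 * π / α * wrap n p k) • ω k := by
  have hsplit : Icc 1 (n - 1) = Icc 1 (n - p) ∪ Icc (n - p + 1) (n - 1) := by
    ext k; simp only [mem_union, mem_Icc]; omega
  rw [hsplit, sum_union (disjoint_left.2 fun k h₁ h₂ => by simp only [mem_Icc] at h₁ h₂; omega),
    rhoP, smul_sum, smul_sum]
  congr 1 <;> refine sum_congr rfl fun k hk => ?_ <;> rw [mem_Icc] at hk <;> simp only [wrap]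
  · rw [if_neg (by omega), Int.cast_zero, mul_zero, sub_zero]
  · rw [if_pos (by omega), Int.cast_one, mul_one]

namespace IsFundamentalWeights

variable {ω : ℕ → Fin n → ℝ}

lemma sum_smul_eq_zero (hω : IsFundamentalWeights n p ω) (c : ℕ → ℝ) :
    ∑ i, (∑ k ∈ Icc 1 (n - 1), c k • ω k) i = 0 := by
  simp only [Finset.sum_apply, Pi.smul_apply, smul_eq_mul]
  rw [sum_comm]
  exact sum_eq_zero fun k hk => by
    rw [← mul_sum, hω.1 k (mem_Icc.1 hk).1 (mem_Icc.1 hk).2, mul_zero]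

lemma aa_dotProduct_sum_smul (hω : IsFundamentalWeights n p ω) (c : ℕ → ℝ) {ℓ : ℕ}
    (hℓ : ℓ ∈ Icc 1 (n - 1)) : aa n p ℓ ⬝ᵥ ∑ k ∈ Icc 1 (n - 1), c k • ω k = c ℓ := by
  rw [mem_Icc] at hℓ
  rw [dotProduct_sum, sum_eq_single_of_mem ℓ (mem_Icc.2 hℓ)]
  · rw [dotProduct_smul, ← inn_eq_dotProduct, hω.2 ℓ hℓ.1 hℓ.2 ℓ hℓ.1 hℓ.2, if_pos rfl,
      smul_eq_mul, mul_one]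
  · intro k hk hkℓ
    rw [mem_Icc] at hk
    rw [dotProduct_smul, ← inn_eq_dotProduct, hω.2 ℓ hℓ.1 hℓ.2 k hk.1 hk.2, if_neg hkℓ.symm,
      smul_zero]

lemma aa_self_dotProduct_sum_smul (hω : IsFundamentalWeights n p ω) (hn : 0 < n)
    (c : ℕ → ℝ) : aa n p n ⬝ᵥ ∑ k ∈ Icc 1 (n - 1), c k • ω k = -∑ k ∈ Icc 1 (n - 1), c k := by
  rw [aa_self_dotProduct hn]
  exact congrArg _ (sum_congr rfl fun ℓ hℓ => hω.aa_dotProduct_sum_smul c hℓ)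

lemma aa_dotProduct_rhoP_add_smul (hω : IsFundamentalWeights n p ω) (hp : 1 ≤ p)
    (hpn : p ≤ n) {α g s A : ℝ} (hsA : s * A = 2 * π * p / α - n * g) (μ : Fin n → ℝ) {ℓ : ℕ}
    (hℓ : ℓ ∈ Icc 1 n) :
    aa n p ℓ ⬝ᵥ (rhoP n p α g ω + s • μ) =
      g - 2 * π / α * wrap n p ℓ + s * kacLabel n p A μ ℓ := by
  rw [dotProduct_add, dotProduct_smul, rhoP_eq_sum hp hpn, kacLabel, smul_eq_mul]
  rcases eq_or_ne ℓ n with rfl | hℓn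
  · have hwrap : ∑ k ∈ Icc 1 (ℓ - 1), (wrap ℓ p k : ℝ) = p - 1 := by
      exact_mod_cast sum_wrap hp hpn
    rw [hω.aa_self_dotProduct_sum_smul (by omega), sum_sub_distrib, sum_const, Nat.card_Icc,
      ← mul_sum, hwrap, if_pos rfl, wrap, if_pos (by omega), nsmul_eq_mul,
      show ℓ - 1 + 1 - 1 = ℓ - 1 by omega, Nat.cast_sub (by omega)]
    push_cast
    linear_combination -hsA
  · rw [hω.aa_dotProduct_sum_smul _ (by simp only [mem_Icc] at hℓ ⊢; omega), if_neg hℓn,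
      add_zero]

lemma mem_Lam_iff (hω : IsFundamentalWeights n p ω) (hcop : p.Coprime n) (hn : 0 < n)
    (A : ℕ) (x : Fin n → ℝ) :
    x ∈ Lam n A ω ↔ ∑ i, x i = 0 ∧ ∀ ℓ ∈ Icc 1 n, ∃ y : ℕ, kacLabel n p A x ℓ = y := by
  constructor
  · rintro ⟨m, hm, rfl⟩
    refine ⟨hω.sum_smul_eq_zero _, fun ℓ hℓ => ?_⟩
    rcases eq_or_ne ℓ n with rfl | hℓn
    · have hmA : ∑ k ∈ Icc 1 (ℓ - 1), m k ≤ A := by exact_mod_cast hm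
      refine ⟨A - ∑ k ∈ Icc 1 (ℓ - 1), m k, ?_⟩
      rw [kacLabel, hω.aa_self_dotProduct_sum_smul hn, if_pos rfl, Nat.cast_sub hmA]
      push_cast
      ring
    · refine ⟨m ℓ, ?_⟩
      rw [kacLabel, hω.aa_dotProduct_sum_smul _ (by simp only [mem_Icc] at hℓ ⊢; omega),
        if_neg hℓn, add_zero]
  · rintro ⟨hsum, hy⟩
    choose! y hy using hy
    have hyℓ : ∀ ℓ ∈ Icc 1 (n - 1), aa n p ℓ ⬝ᵥ x = y ℓ := fun ℓ hℓ => by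
      rw [mem_Icc] at hℓ
      rw [← hy ℓ (mem_Icc.2 ⟨hℓ.1, by omega⟩), kacLabel, if_neg (by omega), add_zero]
    have hyn := hy n (mem_Icc.2 ⟨hn, le_rfl⟩)
    rw [kacLabel, if_pos rfl, aa_self_dotProduct hn, sum_congr rfl hyℓ] at hyn
    refine ⟨y, by linarith [(y n).cast_nonneg (α := ℝ)], (sub_eq_zero.1 ?_)⟩
    refine eq_zero_of_aa_dotProduct_eq_zero hcop ?_ fun ℓ hℓ => ?_
    · simp only [Pi.sub_apply, sum_sub_distrib, hsum, hω.sum_smul_eq_zero, sub_zero]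
    · rw [dotProduct_sub, hω.aa_dotProduct_sum_smul _ hℓ, hyℓ ℓ hℓ, sub_self]

lemma exists_kacLabel_eq_zero (hω : IsFundamentalWeights n p ω) (hcop : p.Coprime n)
    (hn : 0 < n) {A : ℕ} {μ ν : Fin n → ℝ} (hμ : μ ∈ Lam n A ω) (hμν : μ + ν ∉ Lam n A ω) (hν0 : ∑ i, ν i = 0)
    (hν : ∀ ℓ ∈ Icc 1 n, ∃ d : ℤ, aa n p ℓ ⬝ᵥ ν = d ∧ -1 ≤ d) :
    ∃ ℓ ∈ Icc 1 n, kacLabel n p A μ ℓ = 0 ∧ aa n p ℓ ⬝ᵥ ν = -1 := by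
  rw [hω.mem_Lam_iff hcop hn] at hμ hμν
  obtain ⟨hμ0, hμy⟩ := hμ
  by_contra! h
  refine hμν ⟨by simp only [Pi.add_apply, sum_add_distrib, hμ0, hν0, add_zero], fun ℓ hℓ => ?_⟩
  obtain ⟨y, hy⟩ := hμy ℓ hℓ
  obtain ⟨d, hd, hd1⟩ := hν ℓ hℓ
  have hyd : 0 ≤ (y : ℤ) + d := by
    by_contra hneg
    obtain rfl : y = 0 := by omega
    obtain rfl : d = -1 := by omega
    exact h ℓ hℓ (by rw [hy, Nat.cast_zero]) (by rw [hd]; norm_num)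
  refine ⟨((y : ℤ) + d).toNat, ?_⟩
  rw [kacLabel_add, hy, hd]
  exact_mod_cast (Int.toNat_of_nonneg hyd).symm

end IsFundamentalWeights

end Weights

lemma sub_mul_pos_and_lt {n t q : ℕ} {v : ℤ} {A β Y : ℝ} (ht : 0 < t) (htn : t < n)
    (hq : 0 < q) (hv : v ≠ 0) (hA : 0 < A) (hAq : A * q < β) (hY0 : 0 ≤ Y) (hYA : Y ≤ A)
    (h : β * v = t * A - n * Y) : 0 < (t : ℤ) - v * q ∧ (t : ℤ) - v * q < n := by
  have hq1 : (1 : ℤ) ≤ q := by exact_mod_cast hq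
  rcases hv.lt_or_gt with hv | hv
  · have hvR : (0 : ℝ) < -v := by exact_mod_cast neg_pos.2 hv
    have hR : A * (q * -v) < A * (n - t) := by
      nlinarith [mul_lt_mul_of_pos_right hAq hvR]
    have hZ : (q : ℤ) * -v < n - t := by exact_mod_cast lt_of_mul_lt_mul_left hR hA.le
    constructor <;> nlinarith
  · have hvR : (0 : ℝ) < v := by exact_mod_cast hv
    have hR : A * (q * v) < A * t := by
      nlinarith [mul_lt_mul_of_pos_right hAq hvR]
    have hZ : (q : ℤ) * v < t := by exact_mod_cast lt_of_mul_lt_mul_left hR hA.le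
    constructor <;> nlinarith

lemma sin_ne_zero_of_typeI_bound {n p q t : ℕ} {α g A Y : ℝ} {s W : ℤ} (hα : 0 < α)
    (hcop : p.Coprime n) (ht : 0 < t) (htn : t < n) (hq : 0 < q) (hs : s * s = 1)
    (hA : 0 < A) (hAq : A * q < 2 * π / α) (hpq : p * q ≡ s [ZMOD n])
    (hg : n * g = 2 * π / α * p - s * A) (hY0 : 0 ≤ Y) (hYA : Y ≤ A) :
    sin (α * (t * g - 2 * π / α * W + s * Y) / 2) ≠ 0 := by
  rw [Ne, Real.sin_eq_zero_iff]
  rintro ⟨k, hk⟩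
  have hz : t * g - 2 * π / α * W + s * Y = 2 * π / α * k := by
    field_simp at hk ⊢
    linarith
  set u : ℤ := t * p - n * (k + W) with hu
  have hu0 : u ≠ 0 := fun h0 => by
    have hdvd : n ∣ t * p := by
      have : (n : ℤ) ∣ ((t * p : ℕ) : ℤ) := ⟨k + W, by push_cast; linarith⟩
      exact_mod_cast this
    have := Nat.le_of_dvd ht (hcop.symm.dvd_of_dvd_mul_right hdvd)
    omega
  have hsu : s * u ≠ 0 := mul_ne_zero (left_ne_zero_of_mul_eq_one hs) hu0
  have hsuR : 2 * π / α * (s * u : ℤ) = t * A - n * Y := by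
    have hsR : (s : ℝ) * s = 1 := by exact_mod_cast hs
    rw [hu]
    push_cast
    linear_combination (s * n : ℝ) * hz - (s * t : ℝ) * hg + (t * A - n * Y) * hsR
  have hcong : s * u * q ≡ t [ZMOD n] :=
    calc s * u * q = s * t * (p * q) - n * (s * (k + W) * q) := by rw [hu]; ring
      _ ≡ s * t * s - 0 [ZMOD n] :=
        (hpq.mul_left _).sub (Int.modEq_zero_iff_dvd.2 (dvd_mul_right _ _))
      _ = t := by linear_combination (t : ℤ) * hs
  obtain ⟨hpos, hlt⟩ := sub_mul_pos_and_lt ht htn hq hsu hA hAq hY0 hYA hsuR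
  exact hpos.ne' (Int.eq_zero_of_dvd_of_nonneg_of_lt hpos.le hlt hcong.dvd)

lemma TypeI.exists_signed_inverse {n p q : ℕ} {α g : ℝ} (h : TypeI n p q α g) {M : ℤ}
    (hM : 2 * π * p / α - n * g = M) :
    ∃ q' : ℕ, 0 < q' ∧ (M.natAbs : ℝ) * q' < 2 * π / α ∧ (p * q' : ℤ) ≡ M.sign [ZMOD n] := by
  obtain ⟨hq1, hqn, hpq, hbranch⟩ := h
  set β := 2 * π / α
  have hMβ : (M : ℝ) = β * p - n * g := by rw [← hM]; ring
  have hnR : (0 : ℝ) < n := by exact_mod_cast (show 0 < n by omega)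
  have hqR : (0 : ℝ) < q := by exact_mod_cast hq1
  have hpqZ : (p * q : ℤ) ≡ 1 [ZMOD n] := by exact_mod_cast Int.natCast_modEq_iff.2 hpq
  rcases hbranch with ⟨hlo, hhi⟩ | ⟨hlo, hhi⟩
  · have hlo' : β * p - β / q < n * g := by
      have := mul_lt_mul_of_pos_left hlo hnR
      field_simp at this ⊢
      linarith
    have hhi' : n * g < β * p := by
      have := mul_lt_mul_of_pos_left hhi hnR
      field_simp at this
      linarith
    have hMpos : 0 < M := by exact_mod_cast (show (0 : ℝ) < M by linarith)
    refine ⟨q, hq1, ?_, by rwa [Int.sign_eq_one_of_pos hMpos]⟩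
    rw [Nat.cast_natAbs, abs_of_pos hMpos, ← lt_div_iff₀ hqR]
    linarith
  · have hqn' : (q : ℝ) < n := by exact_mod_cast (show q < n by omega)
    have hnqR : (0 : ℝ) < n - q := by linarith
    have hlo' : β * p < n * g := by
      have := mul_lt_mul_of_pos_left hlo hnR
      field_simp at this
      linarith
    have hhi' : n * g < β * p + β / (n - q) := by
      have := mul_lt_mul_of_pos_left hhi hnR
      field_simp at this ⊢
      linarith
    have hMneg : M < 0 := by exact_mod_cast (show (M : ℝ) < 0 by linarith)
    refine ⟨n - q, by omega, ?_, ?_⟩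
    · rw [Nat.cast_natAbs, abs_of_neg hMneg, Nat.cast_sub (by omega), ← lt_div_iff₀ hnqR]
      push_cast
      linarith
    · rw [Int.sign_eq_neg_one_of_neg hMneg, Nat.cast_sub (by omega)]
      calc (p : ℤ) * (n - q) = n * p - p * q := by ring
        _ ≡ 0 - 1 [ZMOD n] := (Int.modEq_zero_iff_dvd.2 (dvd_mul_right _ _)).sub hpqZ
        _ = -1 := by ring

lemma sin_dotProduct_ne_zero {n p q : ℕ} {α g A : ℝ} {s : ℤ} (hα : 0 < α)
    (hcop : p.Coprime n) (hq : 0 < q) (hs : s * s = 1) (hA : 0 < A) (hAq : A * q < 2 * π / α)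
    (hpq : p * q ≡ s [ZMOD n]) (hg : n * g = 2 * π / α * p - s * A) {x : Fin n → ℝ}
    {y : ℕ → ℝ} (hy0 : ∀ ℓ ∈ Icc 1 n, 0 ≤ y ℓ) (hy : ∑ ℓ ∈ Icc 1 n, y ℓ = A)
    (hx : ∀ ℓ ∈ Icc 1 n, aa n p ℓ ⬝ᵥ x = g - 2 * π / α * wrap n p ℓ + s * y ℓ)
    {j k : ℕ} (hj : j ∈ Icc 1 n) (hk : k ∈ Icc 1 n) (hjk : j ≠ k) :
    sin (α * ((ee n j - ee n k) ⬝ᵥ x) / 2) ≠ 0 := by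
  obtain ⟨S, hS, hS0, hSn, hroot⟩ := exists_subset_Icc_ee_sub_ee hcop hj hk hjk
  have hYA : ∑ ℓ ∈ S, y ℓ ≤ A :=
    hy ▸ sum_le_sum_of_subset_of_nonneg hS fun ℓ hℓ _ => hy0 ℓ hℓ
  convert sin_ne_zero_of_typeI_bound (W := ∑ ℓ ∈ S, wrap n p ℓ) hα hcop hS0 hSn hq hs hA hAq
    hpq hg (sum_nonneg fun ℓ hℓ => hy0 ℓ (hS hℓ)) hYA using 3
  rw [hroot, sum_dotProduct, sum_congr rfl fun ℓ hℓ => hx ℓ (hS hℓ)]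
  push_cast
  rw [sum_add_distrib, sum_sub_distrib, sum_const, nsmul_eq_mul, mul_sum, mul_sum]

lemma omegaStd_sub_omegaStd (n r : ℕ) (i i' : Fin n) :
    ∃ d : ℤ, omegaStd n r i - omegaStd n r i' = d ∧ -1 ≤ d := by
  unfold omegaStd
  split_ifs
  exacts [⟨0, by ring, by norm_num⟩, ⟨1, by push_cast; ring, by norm_num⟩,
    ⟨-1, by push_cast; ring, le_rfl⟩, ⟨0, by ring, by norm_num⟩]

lemma sum_omegaStd {n r : ℕ} (hr : r ≤ n) : ∑ i, omegaStd n r i = 0 := by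
  have hcount : ∑ i : Fin n, (if (i : ℕ) + 1 ≤ r then (1 : ℝ) else 0) = r := by
    rw [Fin.sum_univ_eq_sum_range (fun i => if i + 1 ≤ r then (1 : ℝ) else 0) n, sum_boole,
      show (range n).filter (fun i => i + 1 ≤ r) = range r by ext; simp; omega, card_range]
  rcases Nat.eq_zero_or_pos n with rfl | hn
  · simp
  · simp only [omegaStd, sum_sub_distrib, hcount, sum_const, card_univ, Fintype.card_fin,
      nsmul_eq_mul]
    field_simp
    ring

namespace inOrbit

variable {n r : ℕ} {ν : Fin n → ℝ}

lemma sum_eq_zero (hν : inOrbit n r ν) (hr : r ≤ n) : ∑ i, ν i = 0 := by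
  obtain ⟨σ, rfl⟩ := hν
  rw [Equiv.sum_comp σ (omegaStd n r), sum_omegaStd hr]

lemma exists_aa_dotProduct_eq (hν : inOrbit n r ν) (hn : 0 < n) (p : ℕ) {ℓ : ℕ} (hℓ : 1 ≤ ℓ) :
    ∃ d : ℤ, aa n p ℓ ⬝ᵥ ν = d ∧ -1 ≤ d := by
  obtain ⟨σ, rfl⟩ := hν
  rw [aa, sub_dotProduct, ee_dotProduct hn hℓ, ee_dotProduct hn (by omega)]
  exact omegaStd_sub_omegaStd n r _ _

end inOrbit

lemma Vnu_eq_zero_of_aa_dotProduct {n p : ℕ} {α g : ℝ} (hn : 0 < n) (hα : α ≠ 0)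
    {ν x : Fin n → ℝ} {ℓ : ℕ} (hℓ : ℓ ∈ Icc 1 n) (hν : aa n p ℓ ⬝ᵥ ν = -1) (w : ℤ)
    (hx : aa n p ℓ ⬝ᵥ x = g - 2 * π / α * w) : Vnu n α g ν x = 0 := by
  obtain ⟨j, hj, hje⟩ := exists_mem_Icc_ee_eq hn (ℓ + p)
  have hroot : ee n j - ee n ℓ = -aa n p ℓ := by rw [aa, hje, neg_sub]
  have hνj : inn (ee n j - ee n ℓ) ν = 1 := by
    rw [inn_eq_dotProduct, hroot, neg_dotProduct, hν, neg_neg]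
  have hjℓ : j ≠ ℓ := by rintro rfl; simp [inn] at hνj
  have hsin : α * (-(g - 2 * π / α * w) + g) / 2 = w * π := by field_simp; ring
  unfold Vnu
  refine prod_eq_zero hj (prod_eq_zero hℓ ?_)
  rw [if_pos ⟨hjℓ, hνj⟩, inn_eq_dotProduct, hroot, neg_dotProduct, hx, hsin,
    Real.sin_int_mul_pi, zero_div]

theorem statement8_general (n p q : ℕ) (α g : ℝ)
    (hn : 2 ≤ n) (hα : 0 < α) (hp1 : 1 ≤ p) (hpn : p ≤ n - 1) (hcop : Nat.Coprime p n)
    (htype : TypeI n p q α g)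
    (Mz : ℤ) (hMz : 2 * π * p / α - n * g = (Mz : ℝ)) (hMz0 : Mz ≠ 0)
    (ω : ℕ → Fin n → ℝ)
    (hωE : ∀ k : ℕ, 1 ≤ k → k ≤ n - 1 → ∑ i, ω k i = 0)
    (hωδ : ∀ j : ℕ, 1 ≤ j → j ≤ n - 1 → ∀ k : ℕ, 1 ≤ k → k ≤ n - 1 →
      inn (aa n p j) (ω k) = if j = k then (1 : ℝ) else 0)
    (r : ℕ) (hrn : r ≤ n - 1)
    (ν : Fin n → ℝ) (hν : inOrbit n r ν)
    (μ : Fin n → ℝ) (hμ : μ ∈ Lam n |2 * π * p / α - n * g| ω)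
    (hμν : μ + ν ∉ Lam n |2 * π * p / α - n * g| ω) :
    (∀ j ∈ Icc 1 n, ∀ k ∈ Icc 1 n, j ≠ k → inn (ee n j - ee n k) ν = 1 →
      Real.sin (α * inn (ee n j - ee n k)
        (rhoP n p α g ω + Real.sign (2 * π * p / α - n * g) • μ) / 2) ≠ 0) ∧
    Vnu n α g ν (rhoP n p α g ω + Real.sign (2 * π * p / α - n * g) • μ) = 0 := by
  have hn0 : 0 < n := by omega
  have hω : IsFundamentalWeights n p ω := ⟨hωE, hωδ⟩
  obtain ⟨q', hq', hAq, hpq'⟩ := htype.exists_signed_inverse hMz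
  have hs : Mz.sign * Mz.sign = 1 := by
    rw [← Int.sign_mul]; exact Int.sign_eq_one_of_pos (mul_self_pos.2 hMz0)
  have hA : |2 * π * p / α - n * g| = (Mz.natAbs : ℝ) := by
    rw [hMz, Nat.cast_natAbs, Int.cast_abs]
  have hsA : (Mz.sign : ℝ) * Mz.natAbs = 2 * π * p / α - n * g := by
    rw [hMz, Nat.cast_natAbs]; exact_mod_cast Int.sign_mul_abs Mz
  have hx := fun ℓ (hℓ : ℓ ∈ Icc 1 n) =>
    hω.aa_dotProduct_rhoP_add_smul hp1 (by omega) hsA μ hℓ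
  rw [hA] at hμ hμν
  rw [hMz, Real.sign_intCast]
  simp only [inn_eq_dotProduct]
  refine ⟨fun j hj k hk hjk _ => sin_dotProduct_ne_zero hα hcop hq' hs
    (by exact_mod_cast Int.natAbs_pos.2 hMz0) hAq hpq' (by linear_combination hsA)
    (fun ℓ hℓ => ?_) (sum_kacLabel hn0 _ _) hx hj hk hjk, ?_⟩
  · obtain ⟨y, hy⟩ := ((hω.mem_Lam_iff hcop hn0 _ _).1 hμ).2 ℓ hℓ
    exact hy ▸ y.cast_nonneg
  obtain ⟨ℓ, hℓ, hy, hd⟩ := hω.exists_kacLabel_eq_zero hcop hn0 hμ hμν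
    (hν.sum_eq_zero (by omega)) fun ℓ hℓ => hν.exists_aa_dotProduct_eq hn0 p (mem_Icc.1 hℓ).1
  exact Vnu_eq_zero_of_aa_dotProduct hn0 hα.ne' hℓ hd _ (by rw [hx ℓ hℓ, hy, mul_zero, add_zero])

/-- Lemma 2.2, second part: for `μ ∈ Λ⁺_{p,|M|}` with `μ+ν ∉ Λ⁺_{p,|M|}`,
all sine denominators in `V_ν(g;ρ_p+sgn(M)μ)` are nonzero and `V_ν(g;ρ_p+sgn(M)μ) = 0`. -/
theorem statement8 (n p q : ℕ) (α g : ℝ)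
    (hn : 2 ≤ n) (hα : 0 < α) (hp1 : 1 ≤ p) (hpn : p ≤ n - 1) (hcop : Nat.Coprime p n)
    (htype : TypeI n p q α g)
    (Mz : ℤ) (hMz : 2 * π * p / α - n * g = (Mz : ℝ)) (hMz0 : Mz ≠ 0)
    (ω : ℕ → Fin n → ℝ)
    (hωE : ∀ k : ℕ, 1 ≤ k → k ≤ n - 1 → ∑ i, ω k i = 0)
    (hωδ : ∀ j : ℕ, 1 ≤ j → j ≤ n - 1 → ∀ k : ℕ, 1 ≤ k → k ≤ n - 1 →
      inn (aa n p j) (ω k) = if j = k then (1 : ℝ) else 0)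
    (r : ℕ) (hr1 : 1 ≤ r) (hrn : r ≤ n - 1)
    (ν : Fin n → ℝ) (hν : inOrbit n r ν)
    (μ : Fin n → ℝ) (hμ : μ ∈ Lam n |2 * π * p / α - n * g| ω)
    (hμν : μ + ν ∉ Lam n |2 * π * p / α - n * g| ω) :
    (∀ j ∈ Icc 1 n, ∀ k ∈ Icc 1 n, j ≠ k → inn (ee n j - ee n k) ν = 1 →
      Real.sin (α * inn (ee n j - ee n k)
        (rhoP n p α g ω + Real.sign (2 * π * p / α - n * g) • μ) / 2) ≠ 0) ∧
    Vnu n α g ν (rhoP n p α g ω + Real.sign (2 * π * p / α - n * g) • μ) = 0 :=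
  statement8_general n p q α g hn hα hp1 hpn hcop htype Mz hMz hMz0 ω hωE hωδ r hrn ν hν μ hμ hμν
end
end

section
/- Let n ≥ 2 be an integer, α > 0, p ∈ {1,…,n−1} coprime to n, and let g be a type (i) coupling satisfying the quantisation condition M ∈ ℤ ∖ {0}. Then for all r ∈ {1,…,n−1} and all complex-valued functions φ, ψ on the lattice ρ_p+sgn(M)Λ⁺_{p,|M|}, one has (Ŝ_{r,M}φ, ψ)_{p,M} = (φ, Ŝ_{n−r,M}ψ)_{p,M}. Consequently, each operator Ĥ_{r,M} = (Ŝ_{r,M} + Ŝ_{n−r,M})/2 is self-adjoint: (Ĥ_{r,M}φ, ψ)_{p,M} = (φ, Ĥ_{r,M}ψ)_{p,M} for all φ, ψ. -/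
noncomputable section
open Real Finset
open scoped Classical

/-!
Summed over pairs of lattice points, `(Ŝ_{r,M} φ, ψ)` and `(φ, Ŝ_{n-r,M} ψ)` have the same terms
as soon as `W_ν(μ) = W_{-ν}(μ + ν)`. Since `-S_n(ω_r) = S_n(ω_{n-r})` and `V_{-ν}(x) = V_ν(-x)`,
this reduces to the sign identity `s(g;-ν) = s(g;ν)`, which is checked at the barycentre `x₀` of
`Σ̄_{g,p}`: there `V_ν(x₀) V_ν(-x₀)` is a product of factors `H(k - j)` over `j ∈ J`, `k ∉ J` in
`ℤ/nℤ`, with `H` even. Grouped by `d = k - j`, the factor `H(d)^{c(d)}` is paired with the equal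
factor `H(-d)^{c(-d)}`, and at `d = n/2` it is `cos²(αg/2)`. The type (i) condition keeps
`n αg/2` off `πℤ`, so that no factor vanishes.
-/

lemma Finset.prod_pos_of_involution {ι : Type*} (s : Finset ι) (F : ι → ℝ) (σ : ι → ι)
    (hσ_mem : ∀ i ∈ s, σ i ∈ s) (hσ_invol : ∀ i ∈ s, σ (σ i) = i)
    (hF_σ : ∀ i ∈ s, F (σ i) = F i) (hF_ne : ∀ i ∈ s, F i ≠ 0)
    (hF_fix : ∀ i ∈ s, σ i = i → 0 < F i) : 0 < ∏ i ∈ s, F i := by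
  rw [← sign_eq_one_iff, ← signHom_apply, map_prod]
  refine Finset.prod_involution (fun i _ => σ i) (fun i hi => ?_) (fun i hi hsign hfix => ?_)
    hσ_mem hσ_invol
  · rw [hF_σ i hi, ← map_mul, signHom_apply]
    exact sign_pos (mul_self_pos.mpr (hF_ne i hi))
  · exact hsign (sign_pos (hF_fix i hi hfix))

section CrossProduct

variable {G : Type*} [AddCommGroup G] [Fintype G] (P : G → Prop) [DecidablePred P]

lemma card_filter_and_not_add_neg (d : G) :
    #{a | P a ∧ ¬P (a + -d)} = #{a | P a ∧ ¬P (a + d)} := by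
  have hsplit : ∀ e : G, #{a | P a ∧ ¬P (a + e)} + #{a | P a ∧ P (a + e)} = #{a | P a} := by
    intro e
    rw [add_comm, ← Finset.filter_filter, ← Finset.filter_filter,
      Finset.card_filter_add_card_filter_not]
  have hshift : #{a | P a ∧ P (a + -d)} = #{a | P a ∧ P (a + d)} := by
    refine Finset.card_nbij' (· + -d) (· + d) ?_ ?_ ?_ ?_ <;> intro a ha <;> simp_all
  have h₁ := hsplit d
  have h₂ := hsplit (-d)
  omega

theorem prod_prod_ite_and_not_pos (F : G → ℝ) (hF_neg : ∀ d, F (-d) = F d)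
    (hF_ne : ∀ d, d ≠ 0 → F d ≠ 0) (hF_fix : ∀ d, d ≠ 0 → -d = d → 0 < F d) :
    0 < ∏ j, ∏ k, if P j ∧ ¬P k then F (k - j) else 1 := by
  have hcount : ∏ j, ∏ k, (if P j ∧ ¬P k then F (k - j) else 1) =
      ∏ d, F d ^ #{a | P a ∧ ¬P (a + d)} := by
    calc ∏ j, ∏ k, (if P j ∧ ¬P k then F (k - j) else 1)
        = ∏ j, ∏ d, (if P j ∧ ¬P (j + d) then F d else 1) := by
          refine Finset.prod_congr rfl fun j _ => (Fintype.prod_equiv (Equiv.addLeft j) _ _ ?_).symm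
          intro d
          simp only [Equiv.coe_addLeft, add_sub_cancel_left]
      _ = ∏ d, F d ^ #{a | P a ∧ ¬P (a + d)} := by
          rw [Finset.prod_comm]
          refine Finset.prod_congr rfl fun d _ => ?_
          rw [← Finset.prod_filter, Finset.prod_const]
  rw [hcount]
  refine Finset.prod_pos_of_involution _ _ Neg.neg (fun _ _ => Finset.mem_univ _)
    (fun d _ => neg_neg d) (fun d _ => by rw [hF_neg, card_filter_and_not_add_neg]) ?_ ?_
  · intro d _
    by_cases hd : d = 0
    · simp [hd]
    · exact pow_ne_zero _ (hF_ne d hd)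
  · intro d _ hfix
    by_cases hd : d = 0
    · simp [hd]
    · exact pow_pos (hF_fix d hd hfix) _

end CrossProduct

section Kernel

variable {V R : Type*} [AddCommGroup V] [CommSemiring R]

lemma sum_kernel_eq_sum_ite_sub (L O : Finset V) (K : V → V → R)
    (hK₀ : ∀ μ ν, μ + ν ∉ L → K μ ν = 0) (μ : V) (f : V → R) :
    ∑ ν ∈ O, K μ ν * f (μ + ν) = ∑ μ' ∈ L, if μ' - μ ∈ O then K μ (μ' - μ) * f μ' else 0 := by
  rw [← Finset.sum_filter, ← Finset.sum_filter_of_ne (p := fun ν => μ + ν ∈ L)]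
  · refine Finset.sum_nbij' (μ + ·) (· - μ) ?_ ?_ ?_ ?_ ?_ <;> intro x hx <;> simp_all
  · intro ν _ h
    by_contra hν
    exact h (by rw [hK₀ μ ν hν, zero_mul])

theorem sum_kernel_mul_star_eq [StarRing R] (L O O' : Finset V) (hO' : ∀ ν, ν ∈ O' ↔ -ν ∈ O)
    (K : V → V → R) (hK₀ : ∀ μ ν, μ + ν ∉ L → K μ ν = 0)
    (hK : ∀ μ ∈ L, ∀ ν ∈ O, μ + ν ∈ L → K μ ν = star (K (μ + ν) (-ν))) (f g : V → R) :
    ∑ μ ∈ L, (∑ ν ∈ O, K μ ν * f (μ + ν)) * star (g μ) =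
      ∑ μ ∈ L, f μ * star (∑ ν ∈ O', K μ ν * g (μ + ν)) := by
  simp only [sum_kernel_eq_sum_ite_sub L _ K hK₀, Finset.sum_mul, star_sum, Finset.mul_sum]
  conv_rhs => rw [Finset.sum_comm]
  refine Finset.sum_congr rfl fun μ hμ => Finset.sum_congr rfl fun μ' hμ' => ?_
  simp only [hO', neg_sub]
  split_ifs with h
  · rw [hK μ hμ _ h (by simpa using hμ'), add_sub_cancel, neg_sub, star_mul']
    ring
  · simp

end Kernel

def sinRatio (t w : ℝ) : ℝ := Real.sin (w + t) / Real.sin w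

def sinRatioSymm (t w : ℝ) : ℝ := sinRatio t w * sinRatio t (-w)

section SinRatio

variable (t : ℝ)

lemma sinRatio_add_int_mul_pi (w : ℝ) (m : ℤ) : sinRatio t (w + m * π) = sinRatio t w := by
  rw [sinRatio, sinRatio, add_right_comm, Real.sin_add_int_mul_pi, Real.sin_add_int_mul_pi,
    mul_div_mul_left _ _ (zpow_ne_zero m (by norm_num))]

lemma sinRatioSymm_neg (w : ℝ) : sinRatioSymm t (-w) = sinRatioSymm t w := by
  rw [sinRatioSymm, sinRatioSymm, neg_neg, mul_comm]

lemma sinRatioSymm_add_int_mul_pi (w : ℝ) (m : ℤ) :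
    sinRatioSymm t (w + m * π) = sinRatioSymm t w := by
  rw [sinRatioSymm, sinRatioSymm, sinRatio_add_int_mul_pi, neg_add, ← neg_mul, ← Int.cast_neg,
    sinRatio_add_int_mul_pi]

lemma sinRatioSymm_intCast_congr {n : ℕ} (hn : (n : ℝ) ≠ 0) {a b : ℤ} (h : a ≡ b [ZMOD n]) :
    sinRatioSymm t (π * a / n) = sinRatioSymm t (π * b / n) := by
  obtain ⟨m, hm⟩ := h.dvd
  have hb : π * b / n = π * a / n + m * π := by
    rw [show (b : ℝ) = a + n * m by exact_mod_cast (by linarith : b = a + n * m)]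
    field_simp
  rw [hb, sinRatioSymm_add_int_mul_pi]

lemma sinRatioSymm_pi_div_two : sinRatioSymm t (π / 2) = Real.cos t ^ 2 := by
  rw [sinRatioSymm, sinRatio, sinRatio, add_comm, Real.sin_add_pi_div_two, neg_add_eq_sub,
    Real.sin_sub_pi_div_two, Real.sin_neg, Real.sin_pi_div_two]
  ring

lemma sinRatioSymm_ne_zero {w : ℝ} (h₀ : Real.sin w ≠ 0) (h₁ : Real.sin (w + t) ≠ 0)
    (h₂ : Real.sin (-w + t) ≠ 0) : sinRatioSymm t w ≠ 0 :=
  mul_ne_zero (div_ne_zero h₁ h₀) (div_ne_zero h₂ (by rwa [Real.sin_neg, neg_ne_zero]))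

lemma sin_pi_mul_div_add_ne_zero {n : ℕ} (hn : (n : ℝ) ≠ 0) (ht : ∀ m : ℤ, n * t ≠ m * π)
    (c : ℤ) : Real.sin (π * c / n + t) ≠ 0 := by
  rw [Ne, Real.sin_eq_zero_iff]
  rintro ⟨k, hk⟩
  apply ht (n * k - c)
  rw [show t = k * π - π * c / n by linarith]
  push_cast
  field_simp

end SinRatio

lemma Fin.intCast_val_sub_modEq {n : ℕ} (j k : Fin n) :
    (((k - j : Fin n) : ℕ) : ℤ) ≡ (k : ℤ) - (j : ℤ) [ZMOD n] := by
  rw [Fin.val_sub, Int.natCast_mod, Nat.cast_add, Nat.cast_sub j.isLt.le]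
  exact (Int.mod_modEq _ _).trans (Int.modEq_iff_dvd.mpr ⟨-1, by ring⟩)

lemma ee_succ {n : ℕ} (i : Fin n) : ee n (i + 1) = Pi.single i 1 := by
  ext i'
  have hmod : ((i' : ℕ) + 1) % n = ((i : ℕ) + 1) % n ↔ i' = i := by
    rw [← Nat.ModEq, ← Fin.val_inj]
    refine ⟨fun h => ?_, fun h => h ▸ rfl⟩
    have h' := Nat.ModEq.add_right_cancel' 1 h
    rwa [Nat.ModEq, Nat.mod_eq_of_lt i'.isLt, Nat.mod_eq_of_lt i.isLt] at h'
  simp only [ee, Pi.single_apply, hmod]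

lemma inn_ee_sub_ee {n : ℕ} (j k : Fin n) (y : Fin n → ℝ) :
    inn (ee n (j + 1) - ee n (k + 1)) y = y j - y k := by
  rw [inn_eq_dotProduct, ee_succ, ee_succ, sub_dotProduct, single_dotProduct, single_dotProduct,
    one_mul, one_mul]

lemma prod_Icc_one_eq_prod_fin {M : Type*} [CommMonoid M] (n : ℕ) (f : ℕ → M) :
    ∏ j ∈ Icc 1 n, f j = ∏ i : Fin n, f (i + 1) := by
  rw [Fin.prod_univ_eq_prod_range (fun i => f (i + 1)), Finset.range_eq_Ico,
    Finset.prod_Ico_add' f, zero_add]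
  rfl

lemma Vnu_eq_prod_fin (n : ℕ) (α g : ℝ) (ν x : Fin n → ℝ) :
    Vnu n α g ν x = ∏ j : Fin n, ∏ k : Fin n,
      if j ≠ k ∧ ν j - ν k = 1 then
        Real.sin (α * (x j - x k + g) / 2) / Real.sin (α * (x j - x k) / 2)
      else 1 := by
  simp only [Vnu, prod_Icc_one_eq_prod_fin, inn_ee_sub_ee, ne_eq, add_left_inj, Fin.val_inj]

lemma Vnu_neg (n : ℕ) (α g : ℝ) (ν x : Fin n → ℝ) :
    Vnu n α g (-ν) x = Vnu n α g ν (-x) := by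
  rw [Vnu_eq_prod_fin, Vnu_eq_prod_fin, Finset.prod_comm]
  refine Finset.prod_congr rfl fun j _ => Finset.prod_congr rfl fun k _ => ?_
  simp only [Pi.neg_apply, ne_comm, sub_neg_eq_add, neg_add_eq_sub]

lemma neg_omegaStd {n r : ℕ} (hrn : r ≤ n) (i : Fin n) :
    -omegaStd n r i = omegaStd n (n - r) (Fin.rev i) := by
  have hn : (n : ℝ) ≠ 0 := by have := i.pos; positivity
  simp only [omegaStd, Fin.val_rev, Nat.cast_sub hrn]
  by_cases h : (i : ℕ) + 1 ≤ r
  · rw [if_pos h, if_neg (by omega)]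
    field_simp
    ring
  · rw [if_neg h, if_pos (by omega)]
    field_simp
    ring

lemma neg_mem_orbitF {n r : ℕ} (hrn : r ≤ n) {ν : Fin n → ℝ} (hν : ν ∈ orbitF n r) :
    -ν ∈ orbitF n (n - r) := by
  obtain ⟨σ, -, rfl⟩ := Finset.mem_image.mp hν
  refine Finset.mem_image.mpr ⟨σ.trans Fin.revPerm, Finset.mem_univ _, funext fun i => ?_⟩
  exact (neg_omegaStd hrn (σ i)).symm

lemma mem_orbitF_sub_iff {n r : ℕ} (hrn : r ≤ n) {ν : Fin n → ℝ} :
    ν ∈ orbitF n (n - r) ↔ -ν ∈ orbitF n r := by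
  refine ⟨fun h => ?_, fun h => by simpa using neg_mem_orbitF hrn h⟩
  simpa [Nat.sub_sub_self hrn] using neg_mem_orbitF (Nat.sub_le n r) h

lemma mem_orbitF_iff {n r : ℕ} {ν : Fin n → ℝ} : ν ∈ orbitF n r ↔ inOrbit n r ν := by
  simp only [orbitF, inOrbit, Finset.mem_image, Finset.mem_univ, true_and, eq_comm]

lemma omegaStd_sub_eq_one_iff {n r : ℕ} (i k : Fin n) :
    omegaStd n r i - omegaStd n r k = 1 ↔ (i : ℕ) < r ∧ ¬(k : ℕ) < r := by
  simp only [omegaStd, Nat.add_one_le_iff]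
  by_cases hi : (i : ℕ) < r <;> by_cases hk : (k : ℕ) < r <;> simp [hi, hk]
  linarith

section TypeI

variable {n p q : ℕ} {α g : ℝ}

lemma TypeI.two_le (htype : TypeI n p q α g) : 2 ≤ n := by
  obtain ⟨hq1, hqn, -⟩ := htype
  omega

lemma TypeI.ne_int_mul_pi (hα : 0 < α) (htype : TypeI n p q α g) (m : ℤ) :
    n * (α * g / 2) ≠ m * π := by
  have hn : (0 : ℝ) < n := by have := htype.two_le; positivity
  obtain ⟨hq1, hqn, -, hg⟩ := htype
  have hq : 1 / (q : ℝ) ≤ 1 := by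
    rw [div_le_one (by positivity)]
    exact_mod_cast hq1
  have hnq : 1 / ((n : ℝ) - q) ≤ 1 := by
    have : ((q + 1 : ℕ) : ℝ) ≤ n := by exact_mod_cast (show q + 1 ≤ n by omega)
    push_cast at this
    rw [div_le_one (by linarith)]
    linarith
  intro hm
  have hgm : g = 2 * π / α * (m / n) := by
    field_simp
    linarith
  have hmono : ∀ x y : ℝ, 2 * π / α * (x / n) < 2 * π / α * (y / n) ↔ x < y := fun x y => by
    rw [mul_lt_mul_iff_right₀ (by positivity), div_lt_div_iff_of_pos_right hn]
  subst hgm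
  rcases hg with ⟨hlo, hhi⟩ | ⟨hlo, hhi⟩
  · rw [show (p : ℝ) / n - 1 / (n * q) = (p - 1 / q) / n by field_simp, hmono] at hlo
    rw [hmono] at hhi
    have h₁ : (p : ℤ) - 1 < m := by
      exact_mod_cast (show ((p : ℤ) - 1 : ℝ) < m by push_cast; linarith)
    have h₂ : m < (p : ℤ) := by exact_mod_cast hhi
    omega
  · rw [show (p : ℝ) / n + 1 / (n * (n - q)) = (p + 1 / (n - q)) / n by field_simp, hmono] at hhi
    rw [hmono] at hlo
    have h₁ : m < (p : ℤ) + 1 := by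
      exact_mod_cast (show (m : ℝ) < ((p : ℤ) + 1 : ℤ) by push_cast; linarith)
    have h₂ : (p : ℤ) < m := by exact_mod_cast hlo
    omega

lemma TypeI.sub_ne_zero (hα : 0 < α) (htype : TypeI n p q α g) : 2 * π * p / α - n * g ≠ 0 := by
  intro h
  apply htype.ne_int_mul_pi hα p
  field_simp at h
  push_cast
  linarith

end TypeI

-- All the forms `x_j - x_{j+p} - g` cutting out `Σ̄_{g,p}` take the value `M/n` here.
def equispaced (n : ℕ) (α : ℝ) : Fin n → ℝ := fun i => π / (n * α) * ((n : ℝ) - 1 - 2 * i)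

section Equispaced

variable {n : ℕ} {α : ℝ}

lemma sum_equispaced : ∑ i, equispaced n α i = 0 := by
  have hrev : ∀ i : Fin n, equispaced n α (Fin.revPerm i) = -equispaced n α i := by
    intro i
    simp only [equispaced, Fin.revPerm_apply, Fin.val_rev]
    rw [Nat.cast_sub (by omega)]
    push_cast
    ring
  have := Equiv.sum_comp Fin.revPerm (equispaced n α)
  simp only [hrev, Finset.sum_neg_distrib] at this
  linarith

lemma coord_equispaced (hn : 0 < n) {m : ℕ} (hm₁ : 1 ≤ m) (hm₂ : m ≤ 2 * n) :
    coord α (equispaced n α) m = π / (n * α) * ((n : ℝ) + 1 - 2 * m) := by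
  rw [coord, dif_pos hn]
  rcases Nat.lt_or_ge (m - 1) n with h | h
  · simp only [equispaced, Nat.mod_eq_of_lt h, Nat.div_eq_of_lt h]
    push_cast [Nat.cast_sub hm₁]
    ring
  · have hmod : (m - 1) % n = m - 1 - n := by
      rw [Nat.mod_eq_sub_mod h, Nat.mod_eq_of_lt (by omega)]
    have hdiv : (m - 1) / n = 1 := Nat.div_eq_of_lt_le (by omega) (by omega)
    simp only [equispaced, hmod, hdiv]
    push_cast [Nat.cast_sub (by omega : n ≤ m - 1), Nat.cast_sub hm₁]
    field_simp
    ring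

lemma equispaced_mem_SigmaInt {p : ℕ} {g : ℝ} (hn : 0 < n) (hα : α ≠ 0) (hpn : p ≤ n)
    (hM : 2 * π * p / α - n * g ≠ 0) : equispaced n α ∈ SigmaInt n p α g := by
  refine ⟨sum_equispaced, fun j hj => ?_⟩
  obtain ⟨hj₁, hjn⟩ := Finset.mem_Icc.mp hj
  rw [coord_equispaced hn hj₁ (by omega), coord_equispaced hn (by omega) (by omega)]
  have hdiff : π / (n * α) * ((n : ℝ) + 1 - 2 * j) - π / (n * α) * ((n : ℝ) + 1 - 2 * (j + p : ℕ))
      - g = (2 * π * p / α - n * g) / n := by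
    push_cast
    field_simp
    ring
  rw [hdiff, mul_div_assoc', div_pos_iff_of_pos_right (by exact_mod_cast hn)]
  exact Real.sign_mul_pos_of_ne_zero _ hM

end Equispaced

lemma Vnu_mul_Vnu_neg (n : ℕ) (α g : ℝ) (ν x : Fin n → ℝ) :
    Vnu n α g ν x * Vnu n α g ν (-x) = ∏ j : Fin n, ∏ k : Fin n,
      if j ≠ k ∧ ν j - ν k = 1 then sinRatioSymm (α * g / 2) (α * (x j - x k) / 2) else 1 := by
  rw [Vnu_eq_prod_fin, Vnu_eq_prod_fin, ← Finset.prod_mul_distrib]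
  refine Finset.prod_congr rfl fun j _ => ?_
  rw [← Finset.prod_mul_distrib]
  refine Finset.prod_congr rfl fun k _ => ?_
  split_ifs
  · simp only [sinRatioSymm, sinRatio, Pi.neg_apply]
    ring_nf
  · rw [one_mul]

def sinRatioSymmFin (n : ℕ) (t : ℝ) (d : Fin n) : ℝ := sinRatioSymm t (π * ((d : ℕ) : ℤ) / n)

section SinRatioSymmFin

variable {n : ℕ} [NeZero n]

lemma sinRatioSymmFin_neg (t : ℝ) (d : Fin n) :
    sinRatioSymmFin n t (-d) = sinRatioSymmFin n t d := by
  rw [sinRatioSymmFin, sinRatioSymmFin, neg_eq_zero_sub,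
    sinRatioSymm_intCast_congr t (NeZero.ne _) (Fin.intCast_val_sub_modEq d 0)]
  simpa [neg_div] using sinRatioSymm_neg t _

lemma sinRatioSymm_equispaced_sub {α : ℝ} (hα : α ≠ 0) (t : ℝ) (j k : Fin n) :
    sinRatioSymm t (α * (equispaced n α j - equispaced n α k) / 2) =
      sinRatioSymmFin n t (k - j) := by
  have hn : (n : ℝ) ≠ 0 := NeZero.ne _
  rw [sinRatioSymmFin, sinRatioSymm_intCast_congr t hn (Fin.intCast_val_sub_modEq j k)]
  congr 1
  simp only [equispaced]
  push_cast
  field_simp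
  ring

variable {p q : ℕ} {α g : ℝ}

lemma TypeI.sinRatioSymmFin_ne_zero (hα : 0 < α) (htype : TypeI n p q α g) {d : Fin n}
    (hd : d ≠ 0) : sinRatioSymmFin n (α * g / 2) d ≠ 0 := by
  have hn : (n : ℝ) ≠ 0 := NeZero.ne _
  have hd₀ : (0 : ℝ) < (d : ℕ) := by exact_mod_cast Fin.pos_iff_ne_zero.mpr hd
  have hdn : ((d : ℕ) : ℝ) < n := by exact_mod_cast d.isLt
  have ht := htype.ne_int_mul_pi hα
  refine sinRatioSymm_ne_zero _ ?_ (sin_pi_mul_div_add_ne_zero _ hn ht _) ?_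
  · refine (Real.sin_pos_of_pos_of_lt_pi (by positivity) ?_).ne'
    rw [div_lt_iff₀ (by positivity)]
    push_cast
    nlinarith [Real.pi_pos]
  · simpa [neg_div] using sin_pi_mul_div_add_ne_zero _ hn ht (-(d : ℕ))

lemma TypeI.sinRatioSymmFin_pos_of_neg_eq (hα : 0 < α) (htype : TypeI n p q α g) {d : Fin n}
    (hd : d ≠ 0) (hfix : -d = d) : 0 < sinRatioSymmFin n (α * g / 2) d := by
  have hn : (n : ℝ) = 2 * (d : ℕ) := by
    have := congrArg Fin.val hfix
    rw [Fin.val_neg, if_neg hd] at this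
    exact_mod_cast (show n = 2 * (d : ℕ) by omega)
  have hd₀ : ((d : ℕ) : ℝ) ≠ 0 := by exact_mod_cast Fin.val_ne_zero_iff.mpr hd
  have hcos : sinRatioSymmFin n (α * g / 2) d = Real.cos (α * g / 2) ^ 2 := by
    rw [sinRatioSymmFin, ← sinRatioSymm_pi_div_two]
    congr 1
    rw [hn]
    push_cast
    field_simp
  exact lt_of_le_of_ne (hcos ▸ sq_nonneg _) (htype.sinRatioSymmFin_ne_zero hα hd).symm

end SinRatioSymmFin

theorem Vnu_mul_Vnu_neg_equispaced_pos {n p q r : ℕ} {α g : ℝ} (hα : 0 < α)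
    (htype : TypeI n p q α g) {ν : Fin n → ℝ} (hν : ν ∈ orbitF n r) :
    0 < Vnu n α g ν (equispaced n α) * Vnu n α g ν (-equispaced n α) := by
  have : NeZero n := ⟨by have := htype.two_le; omega⟩
  obtain ⟨σ, -, rfl⟩ := Finset.mem_image.mp hν
  have hcond (j k : Fin n) : (j ≠ k ∧ omegaStd n r (σ j) - omegaStd n r (σ k) = 1) ↔
      ((σ j : ℕ) < r ∧ ¬(σ k : ℕ) < r) := by
    rw [omegaStd_sub_eq_one_iff]
    exact and_iff_right_of_imp fun h hjk => h.2 (hjk ▸ h.1)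
  rw [Vnu_mul_Vnu_neg]
  simp only [hcond, sinRatioSymm_equispaced_sub hα.ne']
  exact prod_prod_ite_and_not_pos _ _ (sinRatioSymmFin_neg _)
    (fun _ hd => htype.sinRatioSymmFin_ne_zero hα hd)
    (fun _ hd hfix => htype.sinRatioSymmFin_pos_of_neg_eq hα hd hfix)

lemma sign_Vnu_neg {n : ℕ} {α g : ℝ} {ν x : Fin n → ℝ}
    (h : 0 < Vnu n α g ν x * Vnu n α g ν (-x)) :
    Real.sign (Vnu n α g (-ν) x) = Real.sign (Vnu n α g ν x) := by
  rw [Vnu_neg]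
  rcases mul_pos_iff.mp h with ⟨h₁, h₂⟩ | ⟨h₁, h₂⟩
  · rw [Real.sign_of_pos h₁, Real.sign_of_pos h₂]
  · rw [Real.sign_of_neg h₁, Real.sign_of_neg h₂]

lemma Lam_finite (n : ℕ) (Mabs : ℝ) (ω : ℕ → Fin n → ℝ) : (Lam n Mabs ω).Finite := by
  refine (Set.finite_range fun m : Icc 1 (n - 1) → Fin (⌊Mabs⌋₊ + 1) =>
    ∑ j ∈ (Icc 1 (n - 1)).attach, ((m j : ℕ) : ℝ) • ω j).subset ?_
  rintro μ ⟨m, hsum, rfl⟩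
  have hbound (j : ℕ) (hj : j ∈ Icc 1 (n - 1)) : m j < ⌊Mabs⌋₊ + 1 := by
    refine Nat.lt_succ_of_le (Nat.le_floor ?_)
    exact (Finset.single_le_sum (fun i _ => Nat.cast_nonneg (m i)) hj).trans hsum
  exact ⟨fun j => ⟨m j, hbound j j.2⟩, Finset.sum_attach (Icc 1 (n - 1)) fun j => (m j : ℝ) • ω j⟩

section Lattice

variable {n p r : ℕ} {α g : ℝ} {ω : ℕ → Fin n → ℝ} {s : (Fin n → ℝ) → ℝ}

lemma ip_eq_sum (φ ψ : (Fin n → ℝ) → ℂ) :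
    ip n p α g ω φ ψ = ∑ μ ∈ (Lam_finite n |2 * π * p / α - n * g| ω).toFinset,
      φ (rhoP n p α g ω + Real.sign (2 * π * p / α - n * g) • μ) *
        star (ψ (rhoP n p α g ω + Real.sign (2 * π * p / α - n * g) • μ)) :=
  finsum_mem_eq_finite_toFinset_sum _ _

lemma ip_add_div_two_left (φ₁ φ₂ ψ : (Fin n → ℝ) → ℂ) :
    ip n p α g ω (fun x => (φ₁ x + φ₂ x) / 2) ψ =
      (ip n p α g ω φ₁ ψ + ip n p α g ω φ₂ ψ) / 2 := by
  simp only [ip_eq_sum, ← Finset.sum_add_distrib, Finset.sum_div]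
  exact Finset.sum_congr rfl fun _ _ => by ring

lemma ip_add_div_two_right (φ ψ₁ ψ₂ : (Fin n → ℝ) → ℂ) :
    ip n p α g ω φ (fun x => (ψ₁ x + ψ₂ x) / 2) =
      (ip n p α g ω φ ψ₁ + ip n p α g ω φ ψ₂) / 2 := by
  simp only [ip_eq_sum, ← Finset.sum_add_distrib, Finset.sum_div, star_div₀, star_add,
    star_ofNat]
  exact Finset.sum_congr rfl fun _ _ => by ring

lemma SOp_rhoP_add_smul (hM : 2 * π * p / α - n * g ≠ 0) (φ : (Fin n → ℝ) → ℂ)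
    (μ : Fin n → ℝ) :
    SOp n p r α g ω s φ (rhoP n p α g ω + Real.sign (2 * π * p / α - n * g) • μ) =
      ∑ ν ∈ orbitF n r, (Wmu n p α g ω s μ ν : ℂ) *
        φ (rhoP n p α g ω + Real.sign (2 * π * p / α - n * g) • (μ + ν)) := by
  have hε : Real.sign (2 * π * p / α - n * g) * Real.sign (2 * π * p / α - n * g) = 1 := by
    rcases Real.sign_apply_eq_of_ne_zero _ hM with h | h <;> rw [h] <;> norm_num
  simp only [SOp, add_sub_cancel_left, smul_smul, hε, one_smul, smul_add, add_assoc]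

lemma Wmu_add_neg {μ ν : Fin n → ℝ} (hμ : μ ∈ Lam n |2 * π * p / α - n * g| ω)
    (hμν : μ + ν ∈ Lam n |2 * π * p / α - n * g| ω) (hs : s (-ν) = s ν) :
    Wmu n p α g ω s μ ν = Wmu n p α g ω s (μ + ν) (-ν) := by
  rw [Wmu, Wmu, if_pos hμν, add_neg_cancel_right, if_pos hμ, hs, Vnu_neg, Vnu_neg]
  congr 2
  rw [mul_comm]
  congr 2 <;> abel

theorem ip_SOp_eq_ip_SOp_sub (hM : 2 * π * p / α - n * g ≠ 0) (hrn : r ≤ n)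
    (hs : ∀ ν ∈ orbitF n r, s (-ν) = s ν) (φ ψ : (Fin n → ℝ) → ℂ) :
    ip n p α g ω (SOp n p r α g ω s φ) ψ = ip n p α g ω φ (SOp n p (n - r) α g ω s ψ) := by
  simp only [ip_eq_sum, SOp_rhoP_add_smul hM]
  refine sum_kernel_mul_star_eq _ _ _ (fun ν => mem_orbitF_sub_iff hrn)
    (fun μ ν => (Wmu n p α g ω s μ ν : ℂ)) (fun μ ν h => by
      rw [Set.Finite.mem_toFinset] at h
      rw [Wmu, if_neg h, Complex.ofReal_zero]) ?_
    (fun μ => φ (rhoP n p α g ω + Real.sign (2 * π * p / α - n * g) • μ))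
    (fun μ => ψ (rhoP n p α g ω + Real.sign (2 * π * p / α - n * g) • μ))
  intro μ hμ ν hν hμν
  rw [Set.Finite.mem_toFinset] at hμ hμν
  rw [Wmu_add_neg hμ hμν (hs ν hν), Complex.star_def, Complex.conj_ofReal]

end Lattice

theorem statement11_general (n p q : ℕ) (α g : ℝ)
    (hα : 0 < α) (hpn : p ≤ n - 1)
    (htype : TypeI n p q α g)
    (ω : ℕ → Fin n → ℝ)
    (s : (Fin n → ℝ) → ℝ)
    (hs : ∀ r : ℕ, 1 ≤ r → r ≤ n - 1 → ∀ ν : Fin n → ℝ, inOrbit n r ν →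
      ∀ x ∈ SigmaInt n p α g, s ν = Real.sign (Vnu n α g ν x))
    (r : ℕ) (hr1 : 1 ≤ r) (hrn : r ≤ n - 1)
    (φ ψ : (Fin n → ℝ) → ℂ) :
    ip n p α g ω (SOp n p r α g ω s φ) ψ =
      ip n p α g ω φ (SOp n p (n - r) α g ω s ψ) ∧
    ip n p α g ω
        (fun x => (SOp n p r α g ω s φ x + SOp n p (n - r) α g ω s φ x) / 2) ψ =
      ip n p α g ω φ
        (fun x => (SOp n p r α g ω s ψ x + SOp n p (n - r) α g ω s ψ x) / 2) := by
  have hM := htype.sub_ne_zero hα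
  have hx₀ := equispaced_mem_SigmaInt (by omega) hα.ne' (by omega) hM
  have hs_neg (r' : ℕ) (h₁ : 1 ≤ r') (h₂ : r' ≤ n - 1) : ∀ ν ∈ orbitF n r', s (-ν) = s ν := by
    intro ν hν
    have hν' := neg_mem_orbitF (by omega) hν
    rw [hs (n - r') (by omega) (by omega) _ (mem_orbitF_iff.mp hν') _ hx₀,
      hs r' h₁ h₂ ν (mem_orbitF_iff.mp hν) _ hx₀]
    exact sign_Vnu_neg (Vnu_mul_Vnu_neg_equispaced_pos hα htype hν)
  have hadj (r' : ℕ) (h₁ : 1 ≤ r') (h₂ : r' ≤ n - 1) (φ ψ : (Fin n → ℝ) → ℂ) :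
      ip n p α g ω (SOp n p r' α g ω s φ) ψ = ip n p α g ω φ (SOp n p (n - r') α g ω s ψ) :=
    ip_SOp_eq_ip_SOp_sub hM (by omega) (hs_neg r' h₁ h₂) φ ψ
  have hadj' := hadj (n - r) (by omega) (by omega) φ ψ
  rw [Nat.sub_sub_self (by omega)] at hadj'
  refine ⟨hadj r hr1 hrn φ ψ, ?_⟩
  rw [ip_add_div_two_left, ip_add_div_two_right, hadj r hr1 hrn, hadj', add_comm]

/-- Proposition 2.3: `(Ŝ_{r,M}φ, ψ) = (φ, Ŝ_{n-r,M}ψ)`, and consequently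
each `Ĥ_{r,M} = (Ŝ_{r,M} + Ŝ_{n-r,M})/2` is self-adjoint. -/
theorem statement11 (n p q : ℕ) (α g : ℝ)
    (hn : 2 ≤ n) (hα : 0 < α) (hp1 : 1 ≤ p) (hpn : p ≤ n - 1) (hcop : Nat.Coprime p n)
    (htype : TypeI n p q α g)
    (Mz : ℤ) (hMz : 2 * π * p / α - n * g = (Mz : ℝ)) (hMz0 : Mz ≠ 0)
    (ω : ℕ → Fin n → ℝ)
    (hωE : ∀ k : ℕ, 1 ≤ k → k ≤ n - 1 → ∑ i, ω k i = 0)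
    (hωδ : ∀ j : ℕ, 1 ≤ j → j ≤ n - 1 → ∀ k : ℕ, 1 ≤ k → k ≤ n - 1 →
      inn (aa n p j) (ω k) = if j = k then (1 : ℝ) else 0)
    (s : (Fin n → ℝ) → ℝ)
    (hs : ∀ r : ℕ, 1 ≤ r → r ≤ n - 1 → ∀ ν : Fin n → ℝ, inOrbit n r ν →
      ∀ x ∈ SigmaInt n p α g, s ν = Real.sign (Vnu n α g ν x))
    (r : ℕ) (hr1 : 1 ≤ r) (hrn : r ≤ n - 1)
    (φ ψ : (Fin n → ℝ) → ℂ) :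
    ip n p α g ω (SOp n p r α g ω s φ) ψ =
      ip n p α g ω φ (SOp n p (n - r) α g ω s ψ) ∧
    ip n p α g ω
        (fun x => (SOp n p r α g ω s φ x + SOp n p (n - r) α g ω s φ x) / 2) ψ =
      ip n p α g ω φ
        (fun x => (SOp n p r α g ω s ψ x + SOp n p (n - r) α g ω s ψ x) / 2) :=
  statement11_general n p q α g hα hpn htype ω s hs r hr1 hrn φ ψ
end
end

section
/- Let n ≥ 2 be an integer and α > 0. For u, v ∈ E_n, one has ℰ_r(u) = ℰ_r(v) for all r = 1,…,n−1 if and only if there exist a permutation σ of {1,…,n} and integers k_1,…,k_n with k_1+…+k_n = 0 such that u_j = v_{σ(j)} + (2π/α)·k_j for all j = 1,…,n. -/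
noncomputable section
open Real Finset
open scoped Classical

/-!
The coordinates of `S_n(ω_r)` are `1 - r/n` on an `r`-subset `S` and `-r/n` elsewhere, so on
`E_n` the pairing `⟨ν, u⟩` is `∑_{i ∈ S} u_i`. Hence `ℰ_r(u)` is the `r`-th elementary symmetric
function of the phases `exp(iαu_1), …, exp(iαu_n)`, whose product is `1` on `E_n`. By Vieta, the
`ℰ_r` determine the multiset of phases, and equal multisets of phases mean that the coordinates
agree up to a permutation and shifts in `(2π/α)ℤ`; the shifts sum to zero because `u, v ∈ E_n`.
-/

theorem Multiset.eq_of_card_eq_of_esymm_eq {R : Type*} [CommRing R] [IsDomain R]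
    {s t : Multiset R} (hcard : card s = card t) (h : ∀ k ≤ card s, s.esymm k = t.esymm k) :
    s = t := by
  have hprod : (s.map fun a => Polynomial.X - Polynomial.C a).prod =
      (t.map fun a => Polynomial.X - Polynomial.C a).prod := by
    rw [prod_X_sub_X_eq_sum_esymm, prod_X_sub_X_eq_sum_esymm, ← hcard]
    refine Finset.sum_congr rfl fun k hk => ?_
    rw [h k (Nat.lt_succ_iff.mp (Finset.mem_range.mp hk))]
  simpa only [Polynomial.roots_multiset_prod_X_sub_C] using congrArg Polynomial.roots hprod

theorem Finset.univ_val_map_eq_iff_exists_perm {ι β : Type*} [Fintype ι] {f g : ι → β} :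
    univ.val.map f = univ.val.map g ↔ ∃ σ : Equiv.Perm ι, ∀ i, f i = g (σ i) := by
  constructor
  · intro h
    have hfiber : ∀ c, Fintype.card {i // f i = c} = Fintype.card {i // g i = c} := by
      intro c
      have hc := congrArg (Multiset.count c) h
      simp only [Multiset.count_map] at hc
      simpa only [Fintype.card_subtype, Finset.card, Finset.filter_val, eq_comm] using hc
    exact ⟨Equiv.ofFiberEquiv fun c => Fintype.equivOfCardEq (hfiber c),
      fun i => (Equiv.ofFiberEquiv_map _ i).symm⟩
  · rintro ⟨σ, hσ⟩
    rw [funext hσ, ← Function.comp_def, ← Multiset.map_map, Multiset.map_univ_val_equiv]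

theorem Complex.exp_I_mul_eq_exp_I_mul_iff {α : ℝ} (hα : α ≠ 0) {x y : ℝ} :
    exp (I * α * x) = exp (I * α * y) ↔ ∃ k : ℤ, x = y + 2 * π / α * k := by
  rw [exp_eq_exp_iff_exists_int]
  refine exists_congr fun k => ?_
  have hαC : (α : ℂ) ≠ 0 := ofReal_ne_zero.mpr hα
  rw [← ofReal_inj, ← mul_right_inj' (mul_ne_zero I_ne_zero hαC)]
  push_cast
  constructor <;> intro h <;> field_simp at h ⊢ <;> linear_combination h

def expPhases {ι : Type*} [Fintype ι] (α : ℝ) (u : ι → ℝ) : Multiset ℂ :=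
  univ.val.map fun i => Complex.exp (Complex.I * α * u i)

theorem expPhases_eq_iff {ι : Type*} [Fintype ι] {α : ℝ} (hα : α ≠ 0) {u v : ι → ℝ} :
    expPhases α u = expPhases α v ↔
      ∃ σ : Equiv.Perm ι, ∃ k : ι → ℤ, ∀ i, u i = v (σ i) + 2 * π / α * k i := by
  simp only [expPhases, Finset.univ_val_map_eq_iff_exists_perm,
    Complex.exp_I_mul_eq_exp_I_mul_iff hα, Classical.skolem]

theorem card_expPhases {ι : Type*} [Fintype ι] (α : ℝ) (u : ι → ℝ) :
    Multiset.card (expPhases α u) = Fintype.card ι := by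
  simp [expPhases]

theorem esymm_card_expPhases {ι : Type*} [Fintype ι] (α : ℝ) (u : ι → ℝ) :
    (expPhases α u).esymm (Fintype.card ι) = Complex.exp (Complex.I * α * ∑ i, u i) := by
  rw [Multiset.esymm, ← card_expPhases α u, Multiset.powersetCard_self, Multiset.map_singleton,
    Multiset.sum_singleton, expPhases, Finset.prod_map_val, ← Complex.exp_sum,
    Complex.ofReal_sum, Finset.mul_sum]

def shiftedIndicator (n r : ℕ) (S : Finset (Fin n)) : Fin n → ℝ :=
  fun i => (if i ∈ S then 1 else 0) - (r : ℝ) / n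

theorem shiftedIndicator_injective (n r : ℕ) : Function.Injective (shiftedIndicator n r) := by
  intro S S' h
  ext i
  have hi : (if i ∈ S then 1 else 0 : ℝ) = if i ∈ S' then 1 else 0 :=
    sub_left_inj.mp (congrFun h i)
  split_ifs at hi <;> simp_all

theorem inn_shiftedIndicator {n : ℕ} (r : ℕ) (S : Finset (Fin n)) {u : Fin n → ℝ}
    (hu : ∑ i, u i = 0) : inn (shiftedIndicator n r S) u = ∑ i ∈ S, u i := by
  simp only [inn, shiftedIndicator, sub_mul, ite_mul, one_mul, zero_mul, Finset.sum_sub_distrib,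
    Finset.sum_ite_mem, Finset.univ_inter, ← Finset.mul_sum, hu, mul_zero, sub_zero]

theorem orbitF_eq_image_shiftedIndicator {n r : ℕ} (hr : r ≤ n) :
    orbitF n r = (powersetCard r univ).image (shiftedIndicator n r) := by
  set T : Finset (Fin n) := univ.filter fun i => (i : ℕ) < r
  have hT : #T = r := by simpa [T, hr] using Fin.card_filter_val_lt (n := n) (m := r)
  have hσ : ∀ σ : Equiv.Perm (Fin n),
      (fun i => omegaStd n r (σ i)) = shiftedIndicator n r (T.map σ.symm.toEmbedding) := by
    intro σ
    funext i
    simp [omegaStd, shiftedIndicator, T]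
  ext ν
  simp only [orbitF, mem_image, mem_univ, true_and, mem_powersetCard, subset_univ, hσ]
  constructor
  · rintro ⟨σ, rfl⟩
    exact ⟨_, by simp [hT], rfl⟩
  · rintro ⟨S, hS, rfl⟩
    obtain ⟨σ, hσS⟩ := Equiv.Perm.exists_map_finset_eq T S (hT.trans hS.symm)
    exact ⟨σ.symm, by simp [hσS]⟩

theorem calE_eq_esymm_expPhases {n r : ℕ} (α : ℝ) {u : Fin n → ℝ} (hu : ∑ i, u i = 0)
    (hr : r ≤ n) : calE n r α u = (expPhases α u).esymm r := by
  rw [calE, orbitF_eq_image_shiftedIndicator hr,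
    sum_image fun S _ S' _ h => shiftedIndicator_injective n r h, expPhases,
    Finset.esymm_map_val]
  refine sum_congr rfl fun S _ => ?_
  rw [inn_shiftedIndicator r S hu, Complex.ofReal_sum, Finset.mul_sum, Complex.exp_sum]

theorem forall_calE_eq_iff_expPhases_eq {n : ℕ} (α : ℝ) {u v : Fin n → ℝ}
    (hu : ∑ i, u i = 0) (hv : ∑ i, v i = 0) :
    (∀ r : ℕ, 1 ≤ r → r ≤ n - 1 → calE n r α u = calE n r α v) ↔
      expPhases α u = expPhases α v := by
  constructor
  · intro h
    refine Multiset.eq_of_card_eq_of_esymm_eq (by simp only [card_expPhases]) fun k hk => ?_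
    rw [card_expPhases, Fintype.card_fin] at hk
    rcases Nat.eq_zero_or_pos k with rfl | hk0
    · simp [Multiset.esymm, Multiset.powersetCard_zero_left]
    rcases hk.eq_or_lt with rfl | hkn
    · calc (expPhases α u).esymm k = (expPhases α u).esymm (Fintype.card (Fin k)) := by
            rw [Fintype.card_fin]
        _ = (expPhases α v).esymm (Fintype.card (Fin k)) := by
            rw [esymm_card_expPhases, esymm_card_expPhases, hu, hv]
        _ = (expPhases α v).esymm k := by rw [Fintype.card_fin]
    · rw [← calE_eq_esymm_expPhases α hu hkn.le, ← calE_eq_esymm_expPhases α hv hkn.le]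
      exact h k hk0 (by omega)
  · intro h r _ hr
    rw [calE_eq_esymm_expPhases α hu (by omega), calE_eq_esymm_expPhases α hv (by omega), h]

theorem statement18_general (n : ℕ) (α : ℝ) (hα : 0 < α)
    (u v : Fin n → ℝ) (hu : ∑ i, u i = 0) (hv : ∑ i, v i = 0) :
    (∀ r : ℕ, 1 ≤ r → r ≤ n - 1 → calE n r α u = calE n r α v) ↔
      ∃ σ : Equiv.Perm (Fin n), ∃ kk : Fin n → ℤ, (∑ i, kk i) = 0 ∧
        ∀ i, u i = v (σ i) + 2 * π / α * kk i := by
  rw [forall_calE_eq_iff_expPhases_eq α hu hv, expPhases_eq_iff hα.ne']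
  constructor
  · rintro ⟨σ, kk, hkk⟩
    refine ⟨σ, kk, ?_, hkk⟩
    have hsum : 2 * π / α * ((∑ i, kk i : ℤ) : ℝ) = 0 := by
      have h : ∑ i, u i = ∑ i, (v (σ i) + 2 * π / α * kk i) := Fintype.sum_congr _ _ hkk
      rw [sum_add_distrib, Equiv.sum_comp σ v, hu, hv, ← mul_sum] at h
      push_cast
      linarith
    exact_mod_cast (mul_eq_zero.mp hsum).resolve_left (by positivity)
  · rintro ⟨σ, kk, -, hkk⟩
    exact ⟨σ, kk, hkk⟩

/-- for `u, v ∈ E_n`, `ℰ_r(u) = ℰ_r(v)` for all `r = 1,…,n-1` iff `u` is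
obtained from `v` by a coordinate permutation followed by a translation from `(2π/α)Q`. -/
theorem statement18 (n : ℕ) (α : ℝ) (hn : 2 ≤ n) (hα : 0 < α)
    (u v : Fin n → ℝ) (hu : ∑ i, u i = 0) (hv : ∑ i, v i = 0) :
    (∀ r : ℕ, 1 ≤ r → r ≤ n - 1 → calE n r α u = calE n r α v) ↔
      ∃ σ : Equiv.Perm (Fin n), ∃ kk : Fin n → ℤ, (∑ i, kk i) = 0 ∧
        ∀ i, u i = v (σ i) + 2 * π / α * kk i :=
  statement18_general n α hα u v hu hv
end
end
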